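/- arXiv:2410.14999 — 5 statements merged into one kernel-verified Lean document; each statement's English description precedes it below -/
import Mathlib

section
/- Let d ≥ 2 and let f : ℝ^d → ℝ be C^∞ with compact support. Then for each fixed unit vector ω ∈ S, the function p ↦ [Rf](ω,p) is C^∞ on ℝ, and its derivative is given by (d/dp)[Rf](ω,p) = [Rg](ω,p), where g(x) := ⟪∇f(x), ω⟫ is the directional derivative of f in the direction ω. -/
/-!
The hyperplane `⟪x, ω⟫ = p` is the isometric image of `V = (ℝ ∙ ω)ᗮ` under `y ↦ p • ω + y`, and
isometries carry Hausdorff measure to Hausdorff measure, so `[Rf](ω,p) = ∫_V f (p • ω + y) dμH`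
where `μH = μH[dim V]` is a Haar measure on `V`. Differentiating in `p` under the integral sign is
justified by dominated convergence: `Df` is bounded and, for `p` in a bounded set, the integrand
vanishes outside a fixed ball of `V`. This gives `d/dp [Rf] = R(∂_ω f)`, and since `∂_ω f` is again
smooth with compact support, iterating gives smoothness.
-/

open MeasureTheory Metric Set

/-- The Radon transform of `f : ℝ^d → ℝ`: integral of `f` over the hyperplane
`{x : ⟪x,ω⟫ = p}` with respect to the `(d-1)`-dimensional Hausdorff measure. -/
noncomputable def radonTransform {d : ℕ} (f : EuclideanSpace ℝ (Fin d) → ℝ)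
    (ω : EuclideanSpace ℝ (Fin d)) (p : ℝ) : ℝ :=
  ∫ x in {x : EuclideanSpace ℝ (Fin d) | (inner ℝ x ω : ℝ) = p}, f x ∂(μH[(d : ℝ) - 1])

theorem contDiff_top_of_hasDerivAt_of_mapsTo {α F : Type*} [NormedAddCommGroup F]
    [NormedSpace ℝ F] {P : α → Prop} {D : α → α} {T : α → ℝ → F}
    (hD : ∀ a, P a → P (D a)) (hT : ∀ a, P a → ∀ p, HasDerivAt (T a) (T (D a) p) p)
    {a : α} (ha : P a) : ContDiff ℝ (⊤ : ℕ∞) (T a) := by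
  rw [contDiff_infty]
  intro n
  induction n generalizing a with
  | zero => exact contDiff_zero.2 <| continuous_iff_continuousAt.2 fun p => (hT a ha p).continuousAt
  | succ n ih =>
    have hderiv : deriv (T a) = T (D a) := funext fun p => (hT a ha p).deriv
    rw [Nat.cast_succ, contDiff_succ_iff_deriv, hderiv]
    exact ⟨fun p => (hT a ha p).differentiableAt, by simp, ih (hD a ha)⟩

section ParametricIntegral

variable {E F G : Type*} [NormedAddCommGroup E] [NormedSpace ℝ E]
  [NormedAddCommGroup F] [NormedSpace ℝ F] [NormedAddCommGroup G]

theorem LinearIsometry.norm_le_norm_smul_add (Φ : F →ₗᵢ[ℝ] E) (q : ℝ) (v : E) (y : F) :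
    ‖y‖ ≤ ‖q • v + Φ y‖ + |q| * ‖v‖ := by
  calc ‖y‖ = ‖(q • v + Φ y) - q • v‖ := by rw [add_sub_cancel_left, Φ.norm_map]
    _ ≤ ‖q • v + Φ y‖ + ‖q • v‖ := norm_sub_le _ _
    _ = ‖q • v + Φ y‖ + |q| * ‖v‖ := by rw [norm_smul, Real.norm_eq_abs]

theorem LinearIsometry.apply_smul_add_eq_zero {k : E → G} {R r q : ℝ}
    (hR : tsupport k ⊆ closedBall 0 R) (hq : |q| ≤ r) (Φ : F →ₗᵢ[ℝ] E) (v : E) {y : F}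
    (hy : R + r * ‖v‖ < ‖y‖) : k (q • v + Φ y) = 0 := by
  refine image_eq_zero_of_notMem_tsupport fun hmem => hy.not_ge ?_
  have hR' : ‖q • v + Φ y‖ ≤ R := mem_closedBall_zero_iff.1 (hR hmem)
  have hr : |q| * ‖v‖ ≤ r * ‖v‖ := mul_le_mul_of_nonneg_right hq (norm_nonneg v)
  linarith [Φ.norm_le_norm_smul_add q v y]

variable [NormedSpace ℝ G] [MeasurableSpace F] [BorelSpace F] [ProperSpace F]
  {μ : Measure F} [IsFiniteMeasureOnCompacts μ]

theorem hasDerivAt_integral_smul_add {g : E → G} (hg : ContDiff ℝ 1 g)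
    (hgs : HasCompactSupport g) (Φ : F →ₗᵢ[ℝ] E) (v : E) (p : ℝ) :
    HasDerivAt (fun q => ∫ y, g (q • v + Φ y) ∂μ) (∫ y, fderiv ℝ g (p • v + Φ y) v ∂μ) p := by
  have hline : ∀ q : ℝ, Continuous fun y => q • v + Φ y :=
    fun q => continuous_const.add Φ.continuous
  have hg' : Continuous fun x => fderiv ℝ g x v :=
    (hg.continuous_fderiv one_ne_zero).clm_apply continuous_const
  obtain ⟨R, hR⟩ := hgs.isBounded.subset_closedBall 0
  obtain ⟨C, hC⟩ := (hgs.fderiv_apply (𝕜 := ℝ) v).exists_bound_of_continuous hg'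
  let r := |p| + 1
  have hr : ∀ q ∈ ball p 1, |q| ≤ r := fun q hq => by
    have := abs_sub_abs_le_abs_sub q p
    rw [mem_ball, Real.dist_eq] at hq
    linarith
  have hF_int : Integrable (fun y => g (p • v + Φ y)) μ := by
    refine (hg.continuous.comp (hline p)).integrable_of_hasCompactSupport ?_
    exact hgs.comp_isClosedEmbedding ((isometry_add_left (p • v)).comp Φ.isometry).isClosedEmbedding
  have h_bound : ∀ᵐ y ∂μ, ∀ q ∈ ball p 1,
      ‖fderiv ℝ g (q • v + Φ y) v‖ ≤ (closedBall 0 (R + r * ‖v‖)).indicator (fun _ => C) y := by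
    refine ae_of_all _ fun y q hq => ?_
    by_cases hy : y ∈ closedBall (0 : F) (R + r * ‖v‖)
    · rw [indicator_of_mem hy]
      exact hC _
    · rw [indicator_of_notMem hy, norm_le_zero_iff]
      exact Φ.apply_smul_add_eq_zero ((tsupport_fderiv_apply_subset ℝ v).trans hR) (hr q hq) v
        (by simpa using hy)
  have bound_int : Integrable ((closedBall (0 : F) (R + r * ‖v‖)).indicator fun _ => C) μ :=
    (integrable_indicator_iff measurableSet_closedBall).2
      (integrableOn_const (isCompact_closedBall _ _).measure_lt_top.ne)
  have h_diff : ∀ᵐ y ∂μ, ∀ q ∈ ball p 1,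
      HasDerivAt (fun q => g (q • v + Φ y)) (fderiv ℝ g (q • v + Φ y) v) q := by
    refine ae_of_all _ fun y q _ => ?_
    have hline' : HasDerivAt (fun q : ℝ => q • v + Φ y) v q := by
      simpa using ((hasDerivAt_id q).smul_const v).add_const (Φ y)
    exact ((hg.differentiable one_ne_zero) _).hasFDerivAt.comp_hasDerivAt q hline'
  exact (hasDerivAt_integral_of_dominated_loc_of_deriv_le (ball_mem_nhds p one_pos)
    (.of_forall fun q => (hg.continuous.comp (hline q)).aestronglyMeasurable) hF_int
    (hg'.comp (hline p)).aestronglyMeasurable h_bound bound_int h_diff).2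

end ParametricIntegral

section Hyperplane

variable {E : Type*} [NormedAddCommGroup E] [InnerProductSpace ℝ E]

theorem range_smul_add_orthogonal {ω : E} (hω : ‖ω‖ = 1) (p : ℝ) :
    range (fun y : (ℝ ∙ ω)ᗮ => p • ω + (y : E)) = {x | inner ℝ x ω = p} := by
  ext x
  simp only [mem_range, mem_ofPred_eq]
  constructor
  · rintro ⟨y, rfl⟩
    rw [inner_add_left, real_inner_smul_left, real_inner_self_eq_norm_sq, hω, real_inner_comm,
      Submodule.mem_orthogonal_singleton_iff_inner_right.1 y.2]
    ring
  · intro hx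
    refine ⟨⟨x - p • ω, Submodule.mem_orthogonal_singleton_iff_inner_right.2 ?_⟩,
      add_sub_cancel _ _⟩
    rw [inner_sub_right, real_inner_smul_right, real_inner_self_eq_norm_sq, hω, real_inner_comm, hx]
    ring

theorem natCast_finrank_orthogonal_span_singleton [FiniteDimensional ℝ E] {v : E} (hv : v ≠ 0) :
    (Module.finrank ℝ (ℝ ∙ v)ᗮ : ℝ) = Module.finrank ℝ E - 1 := by
  rw [← (ℝ ∙ v).finrank_add_finrank_orthogonal, finrank_span_singleton hv]
  push_cast
  ring

variable [CompleteSpace E] [MeasurableSpace E] [BorelSpace E] {G : Type*} [NormedAddCommGroup G]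
  [NormedSpace ℝ G]

theorem setIntegral_hyperplane_eq_integral_orthogonal {ω : E} (hω : ‖ω‖ = 1) {s : ℝ} (hs : 0 ≤ s)
    (h : E → G) (p : ℝ) :
    ∫ x in {x | inner ℝ x ω = p}, h x ∂μH[s] = ∫ y : (ℝ ∙ ω)ᗮ, h (p • ω + y) ∂μH[s] := by
  have hiso : Isometry fun y : (ℝ ∙ ω)ᗮ => p • ω + (y : E) :=
    (isometry_add_left (p • ω)).comp isometry_subtype_coe
  rw [← range_smul_add_orthogonal hω, ← hiso.map_hausdorffMeasure (.inl hs),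
    hiso.isClosedEmbedding.measurableEmbedding.integral_map]

end Hyperplane

theorem radonTransform_eq_integral {d : ℕ} {ω : EuclideanSpace ℝ (Fin d)} (hω : ω ∈ sphere 0 1)
    (f : EuclideanSpace ℝ (Fin d) → ℝ) (p : ℝ) :
    radonTransform f ω p =
      ∫ y : (ℝ ∙ ω)ᗮ, f (p • ω + y) ∂μH[(Module.finrank ℝ (ℝ ∙ ω)ᗮ : ℝ)] := by
  have hω1 : ‖ω‖ = 1 := mem_sphere_zero_iff_norm.1 hω
  have hdim : (Module.finrank ℝ (ℝ ∙ ω)ᗮ : ℝ) = d - 1 := by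
    rw [natCast_finrank_orthogonal_span_singleton (norm_ne_zero_iff.1 (by simp [hω1])),
      finrank_euclideanSpace_fin]
  rw [radonTransform, ← hdim]
  exact setIntegral_hyperplane_eq_integral_orthogonal hω1 (Nat.cast_nonneg _) f p

theorem hasDerivAt_radonTransform {d : ℕ} {ω : EuclideanSpace ℝ (Fin d)} (hω : ω ∈ sphere 0 1)
    {g : EuclideanSpace ℝ (Fin d) → ℝ} (hg : ContDiff ℝ 1 g) (hgs : HasCompactSupport g) (p : ℝ) :
    HasDerivAt (radonTransform g ω) (radonTransform (fun x => fderiv ℝ g x ω) ω p) p := by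
  rw [funext (radonTransform_eq_integral hω g), radonTransform_eq_integral hω]
  exact hasDerivAt_integral_smul_add hg hgs (ℝ ∙ ω)ᗮ.subtypeₗᵢ ω p

theorem radon_smooth_deriv_general {d : ℕ}
    (f : EuclideanSpace ℝ (Fin d) → ℝ) (hf : ContDiff ℝ (⊤ : ℕ∞) f)
    (hsupp : HasCompactSupport f) :
    ∀ ω ∈ sphere (0 : EuclideanSpace ℝ (Fin d)) 1,
      ContDiff ℝ (⊤ : ℕ∞) (fun p => radonTransform f ω p) ∧
      ∀ p : ℝ, deriv (fun q => radonTransform f ω q) p =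
        radonTransform (fun x => (inner ℝ (gradient f x) ω : ℝ)) ω p := by
  intro ω hω
  have hdirDeriv : ∀ g : EuclideanSpace ℝ (Fin d) → ℝ, ContDiff ℝ (⊤ : ℕ∞) g ∧ HasCompactSupport g →
      ContDiff ℝ (⊤ : ℕ∞) (fun x => fderiv ℝ g x ω) ∧ HasCompactSupport (fun x => fderiv ℝ g x ω) :=
    fun g ⟨hg, hgs⟩ => ⟨(hg.fderiv_right (m := (⊤ : ℕ∞)) (by simp)).clm_apply contDiff_const,
      hgs.fderiv_apply (𝕜 := ℝ) ω⟩
  have hderiv : ∀ g : EuclideanSpace ℝ (Fin d) → ℝ, ContDiff ℝ (⊤ : ℕ∞) g ∧ HasCompactSupport g →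
      ∀ p, HasDerivAt (radonTransform g ω) (radonTransform (fun x => fderiv ℝ g x ω) ω p) p :=
    fun g ⟨hg, hgs⟩ => hasDerivAt_radonTransform hω (hg.of_le (by simp)) hgs
  have hgrad : (fun x => inner ℝ (gradient f x) ω) = fun x => fderiv ℝ f x ω :=
    funext fun x => inner_gradient_left
  refine ⟨contDiff_top_of_hasDerivAt_of_mapsTo hdirDeriv hderiv ⟨hf, hsupp⟩, fun p => ?_⟩
  rw [hgrad]
  exact (hderiv f ⟨hf, hsupp⟩ p).deriv

/-- For smooth compactly supported `f`, the Radon projection `p ↦ [Rf](ω,p)` is smooth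
and its derivative is the Radon projection of the directional derivative `⟪∇f, ω⟫`. -/
theorem radon_smooth_deriv {d : ℕ} (hd : 2 ≤ d)
    (f : EuclideanSpace ℝ (Fin d) → ℝ) (hf : ContDiff ℝ (⊤ : ℕ∞) f)
    (hsupp : HasCompactSupport f) :
    ∀ ω ∈ sphere (0 : EuclideanSpace ℝ (Fin d)) 1,
      ContDiff ℝ (⊤ : ℕ∞) (fun p => radonTransform f ω p) ∧
      ∀ p : ℝ, deriv (fun q => radonTransform f ω q) p =
        radonTransform (fun x => (inner ℝ (gradient f x) ω : ℝ)) ω p :=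
  radon_smooth_deriv_general f hf hsupp
end

section
/- Let d ≥ 2 and let u : ℝ × ℝ^d → ℝ be C^∞ and satisfy the free-space wave equation ∂²u/∂t²(t,x) = Δu(t,x) for all (t,x). Assume there is R > 0 such that u(t,x) = 0 whenever |x| ≥ R + |t|. Then for every fixed unit vector ω ∈ S, the function w(t,p) := [R u(t,·)](ω,p) (the Radon projection of the time-t slice of u) satisfies the one-dimensional wave equation ∂²w/∂t²(t,p) = ∂²w/∂p²(t,p) for all (t,p) ∈ ℝ × ℝ. -/
open MeasureTheory Metric Set

/-- The Euclidean Laplacian: sum of the second derivatives along the coordinate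
directions. -/
noncomputable def laplacian {d : ℕ} (f : EuclideanSpace ℝ (Fin d) → ℝ)
    (x : EuclideanSpace ℝ (Fin d)) : ℝ :=
  ∑ i : Fin d, iteratedDeriv 2 (fun s : ℝ => f (x + s • EuclideanSpace.single i (1 : ℝ))) 0

/-!
Parametrize the hyperplane `⟪x, ω⟫ = p` isometrically by `y ↦ y + p • ω` with `y ∈ ω⊥`. The
Radon transform becomes an integral over `ω⊥` against a Haar measure, and since the integrands
vanish outside a cone, both second derivatives can be taken under the integral sign. Expanding
the Laplacian in an orthonormal basis that contains `ω`, the wave equation turns `∂ₜ²` of the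
integrand into the normal derivative `∂_ω²` plus second derivatives along `ω⊥`. The latter
integrate to zero over `ω⊥` (integration by parts against compact support), and `∂_ω²` of the
integrand is exactly `∂ₚ²`.
-/

open Topology

section LineDerivatives

variable {E G : Type*} [NormedAddCommGroup E] [NormedSpace ℝ E] [NormedAddCommGroup G]
  [NormedSpace ℝ G]

@[fun_prop]
theorem Submodule.contDiff_subtype_val (K : Submodule ℝ E) {n : WithTop ℕ∞} :
    ContDiff ℝ n fun x : K => (x : E) :=
  K.subtypeL.contDiff

theorem iteratedDeriv_two_comp_add_smul {f : E → G} (hf : ContDiff ℝ 2 f) (x v : E) (s : ℝ) :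
    iteratedDeriv 2 (fun r : ℝ => f (x + r • v)) s = iteratedFDeriv ℝ 2 f (x + s • v) ![v, v] := by
  have hline : (fun r : ℝ => f (x + r • v)) =
      (fun z => f (x + z)) ∘ (ContinuousLinearMap.id ℝ ℝ).smulRight v := by
    ext r; simp
  have htrans : ContDiff ℝ 2 fun z => f (x + z) := by fun_prop
  rw [iteratedDeriv_eq_iteratedFDeriv, hline,
    ContinuousLinearMap.iteratedFDeriv_comp_right _ htrans _ le_rfl, iteratedFDeriv_comp_add_left]
  simp only [ContinuousMultilinearMap.compContinuousLinearMap_apply]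
  congr 1
  ext i
  fin_cases i <;> simp

theorem hasDerivAt_comp_prodMk_left {F : ℝ × E → G} {s : ℝ} {y : E}
    (hF : DifferentiableAt ℝ F (s, y)) :
    HasDerivAt (fun r => F (r, y)) (fderiv ℝ F (s, y) (1, 0)) s :=
  hF.hasFDerivAt.comp_hasDerivAt s ((hasDerivAt_id s).prodMk (hasDerivAt_const s y))

end LineDerivatives

section IntegralOfDerivative

variable {E G : Type*} [NormedAddCommGroup E] [NormedSpace ℝ E] [FiniteDimensional ℝ E]
  [MeasurableSpace E] [BorelSpace E] {μ : Measure E} [μ.IsAddHaarMeasure]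
  [NormedAddCommGroup G] [NormedSpace ℝ G]

theorem integral_fderiv_apply_eq_zero {g : E → G} (hg : ContDiff ℝ 1 g)
    (hsupp : HasCompactSupport g) (v : E) : ∫ x, fderiv ℝ g x v ∂μ = 0 := by
  have hint : Integrable g μ := hg.continuous.integrable_of_hasCompactSupport hsupp
  have hint' : Integrable (fun x => fderiv ℝ g x v) μ :=
    ((hg.continuous_fderiv one_ne_zero).clm_apply continuous_const).integrable_of_hasCompactSupport
      ((hsupp.fderiv ℝ).comp_left (g := fun L : E →L[ℝ] G => L v) rfl)
  simpa using integral_smul_fderiv_eq_neg_fderiv_smul_of_integrable (μ := μ) (v := v)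
    (f := fun _ => (1 : ℝ)) (g := g) (by simp) (by simpa using hint') (by simpa using hint)
    (fun _ _ => differentiableAt_const _) (fun x _ => hg.differentiable one_ne_zero x)

theorem integral_iteratedFDeriv_two_eq_zero {g : E → G} (hg : ContDiff ℝ 2 g)
    (hsupp : HasCompactSupport g) (v : E) : ∫ x, iteratedFDeriv ℝ 2 g x ![v, v] ∂μ = 0 := by
  have hg' : ContDiff ℝ 1 (fderiv ℝ g) := hg.fderiv_right le_rfl
  have hsecond : ∀ x, iteratedFDeriv ℝ 2 g x ![v, v] = fderiv ℝ (fun z => fderiv ℝ g z v) x v := by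
    intro x
    rw [iteratedFDeriv_two_apply, fderiv_clm_apply (hg'.differentiable one_ne_zero x)
      (differentiableAt_const v)]
    simp
  simp only [hsecond]
  exact integral_fderiv_apply_eq_zero (hg'.clm_apply contDiff_const)
    ((hsupp.fderiv ℝ).comp_left (g := fun L : E →L[ℝ] G => L v) rfl) v

end IntegralOfDerivative

section ConeSupport

variable {E G : Type*} [NormedAddCommGroup E] [NormedAddCommGroup G] {F : ℝ × E → G} {R : ℝ}

/-- The strict inequality makes the region open, so that the condition passes to derivatives. -/
def VanishesOutsideCone (F : ℝ × E → G) (R : ℝ) : Prop :=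
  ∀ s y, R + |s| < ‖y‖ → F (s, y) = 0

theorem VanishesOutsideCone.hasCompactSupport [ProperSpace E] (hF : VanishesOutsideCone F R)
    (s : ℝ) : HasCompactSupport fun y => F (s, y) :=
  .intro (isCompact_closedBall 0 (R + |s|)) fun y hy => hF s y (by simpa using hy)

variable [NormedSpace ℝ E] [NormedSpace ℝ G]

theorem VanishesOutsideCone.fderiv_apply (hF : VanishesOutsideCone F R) (v : ℝ × E) :
    VanishesOutsideCone (fun z => fderiv ℝ F z v) R := by
  intro s y hsy
  have hopen : IsOpen {z : ℝ × E | R + |z.1| < ‖z.2‖} :=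
    isOpen_lt (continuous_const.add (continuous_abs.comp continuous_fst))
      (continuous_norm.comp continuous_snd)
  have hzero : F =ᶠ[𝓝 (s, y)] fun _ => 0 :=
    Filter.eventually_of_mem (hopen.mem_nhds hsy) fun z hz => hF z.1 z.2 hz
  simp [hzero.fderiv_eq]

variable [ProperSpace E] [MeasurableSpace E] [BorelSpace E] {μ : Measure E}
  [IsFiniteMeasureOnCompacts μ]

theorem VanishesOutsideCone.hasDerivAt_integral (hF : VanishesOutsideCone F R)
    (hc : ContDiff ℝ 1 F) (t : ℝ) :
    HasDerivAt (fun s => ∫ y, F (s, y) ∂μ) (∫ y, fderiv ℝ F (t, y) (1, 0) ∂μ) t := by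
  have hint : ∀ s, Integrable (fun y => F (s, y)) μ := fun s =>
    (hc.continuous.comp (Continuous.prodMk_right s)).integrable_of_hasCompactSupport
      (hF.hasCompactSupport s)
  have hc' : Continuous fun z => fderiv ℝ F z (1, 0) :=
    (hc.continuous_fderiv one_ne_zero).clm_apply continuous_const
  set K := closedBall (0 : E) (R + |t| + 1)
  obtain ⟨C, hC⟩ := ((isCompact_closedBall t 1).prod (isCompact_closedBall (0 : E)
    (R + |t| + 1))).exists_bound_of_continuousOn hc'.continuousOn
  refine (hasDerivAt_integral_of_dominated_loc_of_deriv_le (bound := K.indicator fun _ => C)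
    (ball_mem_nhds t one_pos) (.of_forall fun s => (hint s).1) (hint t)
    (hc'.comp (Continuous.prodMk_right t)).aestronglyMeasurable (.of_forall fun y s hs => ?_)
    ((integrableOn_const measure_closedBall_lt_top.ne).integrable_indicator
      measurableSet_closedBall)
    (.of_forall fun y s _ => hasDerivAt_comp_prodMk_left (hc.differentiable one_ne_zero _))).2
  have hs' : |s - t| < 1 := by simpa [Real.dist_eq] using hs
  by_cases hy : y ∈ K
  · rw [indicator_of_mem hy]
    exact hC (s, y) ⟨ball_subset_closedBall hs, hy⟩
  · have hy' : R + |s| < ‖y‖ := by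
      have : R + |t| + 1 < ‖y‖ := by simpa [K] using hy
      linarith [abs_sub_abs_le_abs_sub s t]
    simp [indicator_of_notMem hy, hF.fderiv_apply (1, 0) s y hy']

theorem VanishesOutsideCone.iteratedDeriv_two_integral
    (hF : VanishesOutsideCone F R) (hc : ContDiff ℝ 2 F) (t : ℝ) :
    iteratedDeriv 2 (fun s => ∫ y, F (s, y) ∂μ) t =
      ∫ y, iteratedDeriv 2 (fun s => F (s, y)) t ∂μ := by
  set F₁ : ℝ × E → G := fun z => fderiv ℝ F z (1, 0)
  have hc₁ : ContDiff ℝ 1 F₁ := (hc.fderiv_right le_rfl).clm_apply contDiff_const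
  have hderiv : deriv (fun s => ∫ y, F (s, y) ∂μ) = fun s => ∫ y, F₁ (s, y) ∂μ :=
    funext fun s => (hF.hasDerivAt_integral (hc.of_le one_le_two) s).deriv
  have hslice : ∀ y, deriv (fun s => F (s, y)) = fun s => F₁ (s, y) := fun y =>
    funext fun s => (hasDerivAt_comp_prodMk_left (hc.differentiable two_ne_zero _)).deriv
  simp only [iteratedDeriv_succ, iteratedDeriv_zero, hderiv, hslice]
  rw [((hF.fderiv_apply (1, 0)).hasDerivAt_integral hc₁ t).deriv]
  congr 1 with y
  exact (hasDerivAt_comp_prodMk_left (hc₁.differentiable one_ne_zero _)).deriv.symm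

end ConeSupport

section HyperplaneSlices

variable {V : Type*} [NormedAddCommGroup V] [NormedSpace ℝ V] {u : ℝ × V → ℝ} {R : ℝ} {ω : V}

theorem norm_le_norm_add_smul_add_abs (hω : ‖ω‖ = 1) (y : V) (q : ℝ) :
    ‖y‖ ≤ ‖y + q • ω‖ + |q| := by
  simpa [norm_smul, hω] using norm_le_insert' y (y + q • ω)

theorem VanishesOutsideCone.comp_hyperplane (hu : VanishesOutsideCone u R) (hω : ‖ω‖ = 1)
    (K : Submodule ℝ V) (p : ℝ) :
    VanishesOutsideCone (fun z : ℝ × K => u (z.1, ↑z.2 + p • ω)) (R + |p|) := fun s y hy =>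
  hu s _ (by rw [Submodule.coe_norm] at hy; linarith [norm_le_norm_add_smul_add_abs hω y p])

theorem VanishesOutsideCone.comp_normal_coordinate (hu : VanishesOutsideCone u R)
    (hω : ‖ω‖ = 1) (K : Submodule ℝ V) (t : ℝ) :
    VanishesOutsideCone (fun z : ℝ × K => u (t, ↑z.2 + z.1 • ω)) (R + |t|) := fun q y hy =>
  hu t _ (by rw [Submodule.coe_norm] at hy; linarith [norm_le_norm_add_smul_add_abs hω y q])

end HyperplaneSlices

section Hyperplane

variable {V G : Type*} [NormedAddCommGroup V] [NormedSpace ℝ V]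

theorem Submodule.isometry_subtype_add (K : Submodule ℝ V) (a : V) :
    Isometry fun y : K => (y : V) + a :=
  (IsometryEquiv.addRight a).isometry.comp K.subtypeₗᵢ.isometry

variable [FiniteDimensional ℝ V] [NormedAddCommGroup G] {K : Submodule ℝ V} [MeasurableSpace K]
  [BorelSpace K] {ν : Measure K}

theorem HasCompactSupport.integrable_comp_subtype_add [IsFiniteMeasureOnCompacts ν] {g : V → G}
    (hsupp : HasCompactSupport g) (hg : Continuous g) (a : V) :
    Integrable (fun y : K => g (↑y + a)) ν :=
  (hg.comp (K.isometry_subtype_add a).continuous).integrable_of_hasCompactSupport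
    (hsupp.comp_isClosedEmbedding (K.isometry_subtype_add a).isClosedEmbedding)

variable [NormedSpace ℝ G]

theorem integral_iteratedFDeriv_two_comp_subtype_add_eq_zero [ν.IsAddHaarMeasure] {f : V → G}
    (hf : ContDiff ℝ 2 f) (hsupp : HasCompactSupport f) (a : V) (w : K) :
    ∫ y, iteratedFDeriv ℝ 2 f (↑y + a) ![(w : V), w] ∂ν = 0 := by
  set g : K → G := fun y => f (↑y + a)
  have hg : ContDiff ℝ 2 g := by fun_prop
  have hline : ∀ y : K,
      iteratedFDeriv ℝ 2 f (↑y + a) ![(w : V), w] = iteratedFDeriv ℝ 2 g y ![w, w] := by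
    intro y
    have hf' := iteratedDeriv_two_comp_add_smul hf (↑y + a) (w : V) 0
    have hg' := iteratedDeriv_two_comp_add_smul hg y w 0
    simp only [zero_smul, add_zero] at hf' hg'
    rw [← hf', ← hg']
    congr 1 with r
    simp only [g, Submodule.coe_add, Submodule.coe_smul, add_right_comm]
  simp only [hline]
  exact integral_iteratedFDeriv_two_eq_zero hg
    (hsupp.comp_isClosedEmbedding (K.isometry_subtype_add a).isClosedEmbedding) w

end Hyperplane

section Laplacian

open Laplacian

variable {V G : Type*} [NormedAddCommGroup V] [InnerProductSpace ℝ V] [FiniteDimensional ℝ V]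
  [NormedAddCommGroup G] [NormedSpace ℝ G]

theorem integral_laplacian_comp_subtype_add_smul {ω : V} (hω : ‖ω‖ = 1)
    [MeasurableSpace (ℝ ∙ ω)ᗮ] [BorelSpace (ℝ ∙ ω)ᗮ] {ν : Measure (ℝ ∙ ω)ᗮ} [ν.IsAddHaarMeasure]
    {f : V → G} (hf : ContDiff ℝ 2 f) (hsupp : HasCompactSupport f) (p : ℝ) :
    ∫ y, Δ f (↑y + p • ω) ∂ν = ∫ y, iteratedFDeriv ℝ 2 f (↑y + p • ω) ![ω, ω] ∂ν := by
  have hω' : Orthonormal ℝ ((↑) : ({ω} : Set V) → V) :=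
    orthonormal_subsingleton_iff.2 fun ⟨_, rfl⟩ => hω
  obtain ⟨u, b, hωu, hb⟩ := hω'.exists_orthonormalBasis_extension
  set i₀ : u := ⟨ω, hωu rfl⟩
  have hbi₀ : b i₀ = ω := by rw [hb]
  have htangent : ∀ i ≠ i₀, b i ∈ (ℝ ∙ ω)ᗮ := fun i hi => by
    rw [Submodule.mem_orthogonal_singleton_iff_inner_right, ← hbi₀]
    exact b.orthonormal.2 hi.symm
  have hint : ∀ i, Integrable
      (fun y : (ℝ ∙ ω)ᗮ => iteratedFDeriv ℝ 2 f (↑y + p • ω) ![b i, b i]) ν := fun i =>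
    HasCompactSupport.integrable_comp_subtype_add
      ((hsupp.iteratedFDeriv 2).comp_left (g := fun L : V [×2]→L[ℝ] G => L ![b i, b i]) rfl)
      ((continuous_eval_const _).comp (hf.continuous_iteratedFDeriv le_rfl)) (p • ω)
  simp only [InnerProductSpace.laplacian_eq_iteratedFDeriv_orthonormalBasis f b]
  rw [integral_finsetSum _ fun i _ => hint i, Finset.sum_eq_single i₀ (fun i _ hi =>
    integral_iteratedFDeriv_two_comp_subtype_add_eq_zero hf hsupp (p • ω) ⟨b i, htangent i hi⟩)
    (by simp), hbi₀]

end Laplacian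

open Laplacian in
theorem laplacian_eq_innerProductSpace_laplacian {d : ℕ} {f : EuclideanSpace ℝ (Fin d) → ℝ}
    (hf : ContDiff ℝ 2 f) (x : EuclideanSpace ℝ (Fin d)) : _root_.laplacian f x = Δ f x := by
  simp [_root_.laplacian, InnerProductSpace.laplacian_eq_iteratedFDeriv_orthonormalBasis f
    (EuclideanSpace.basisFun (Fin d) ℝ), iteratedDeriv_two_comp_add_smul hf]

theorem isAddHaarMeasure_hausdorffMeasure_orthogonal {V : Type*} [NormedAddCommGroup V]
    [InnerProductSpace ℝ V] [FiniteDimensional ℝ V] [MeasurableSpace V] [BorelSpace V] {ω : V}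
    (hω : ω ≠ 0) :
    (μH[(Module.finrank ℝ V : ℝ) - 1] : Measure (ℝ ∙ ω)ᗮ).IsAddHaarMeasure := by
  have hrank : Module.finrank ℝ (ℝ ∙ ω)ᗮ + 1 = Module.finrank ℝ V := by
    rw [← finrank_span_singleton (K := ℝ) hω, add_comm]
    exact Submodule.finrank_add_finrank_orthogonal _
  rw [← hrank]
  push_cast
  rw [add_sub_cancel_right]
  infer_instance

theorem radonTransform_eq_integral_orthogonal {d : ℕ} (f : EuclideanSpace ℝ (Fin d) → ℝ)
    {ω : EuclideanSpace ℝ (Fin d)} (hω : ‖ω‖ = 1) (p : ℝ) :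
    radonTransform f ω p = ∫ y : (ℝ ∙ ω)ᗮ, f (↑y + p • ω) ∂μH[(d : ℝ) - 1] := by
  set φ : (ℝ ∙ ω)ᗮ → EuclideanSpace ℝ (Fin d) := fun y => ↑y + p • ω
  have hφ : Isometry φ := (ℝ ∙ ω)ᗮ.isometry_subtype_add (p • ω)
  have hrange : range φ = {x | inner ℝ x ω = p} := by
    ext x
    simp only [mem_range, mem_ofPred_eq]
    constructor
    · rintro ⟨y, rfl⟩
      have hy := Submodule.mem_orthogonal_singleton_iff_inner_right.1 y.2
      simp [φ, inner_add_left, real_inner_comm, hy, real_inner_smul_right, hω]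
    · intro hx
      refine ⟨⟨x - p • ω, Submodule.mem_orthogonal_singleton_iff_inner_right.2 ?_⟩, by simp [φ]⟩
      rw [inner_sub_right, real_inner_smul_right, real_inner_self_eq_norm_sq, hω, real_inner_comm,
        hx]
      ring
  have hd : (0 : ℝ) ≤ d - 1 := by
    rcases Nat.eq_zero_or_pos d with rfl | hd
    · simp [Subsingleton.elim ω 0] at hω
    · exact sub_nonneg.2 (by exact_mod_cast hd)
  rw [radonTransform, ← hrange, ← hφ.map_hausdorffMeasure (Or.inl hd),
    hφ.isClosedEmbedding.measurableEmbedding.integral_map]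

theorem radon_of_wave_solves_1d_wave_general {d : ℕ}
    (u : ℝ × EuclideanSpace ℝ (Fin d) → ℝ) (hu : ContDiff ℝ (⊤ : ℕ∞) u)
    (hwave : ∀ t : ℝ, ∀ x : EuclideanSpace ℝ (Fin d),
      iteratedDeriv 2 (fun s => u (s, x)) t = laplacian (fun y => u (t, y)) x)
    (R : ℝ)
    (hsupp : ∀ t : ℝ, ∀ x : EuclideanSpace ℝ (Fin d), R + |t| ≤ ‖x‖ → u (t, x) = 0) :
    ∀ ω ∈ sphere (0 : EuclideanSpace ℝ (Fin d)) 1, ∀ t p : ℝ,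
      iteratedDeriv 2 (fun s => radonTransform (fun y => u (s, y)) ω p) t =
        iteratedDeriv 2 (fun q => radonTransform (fun y => u (t, y)) ω q) p := by
  intro ω hω t p
  rw [mem_sphere_zero_iff_norm] at hω
  have : (μH[(d : ℝ) - 1] : Measure (ℝ ∙ ω)ᗮ).IsAddHaarMeasure := by
    simpa using isAddHaarMeasure_hausdorffMeasure_orthogonal (ω := ω) (by rintro rfl; simp at hω)
  have hcone : VanishesOutsideCone u R := fun s x h => hsupp s x h.le
  have hu2 : ContDiff ℝ 2 u := hu.of_le (WithTop.coe_le_coe.2 le_top)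
  have hut : ContDiff ℝ 2 fun x => u (t, x) := by fun_prop
  simp only [radonTransform_eq_integral_orthogonal _ hω]
  calc _ = ∫ y : (ℝ ∙ ω)ᗮ, iteratedDeriv 2 (fun s => u (s, ↑y + p • ω)) t ∂μH[(d : ℝ) - 1] :=
        (hcone.comp_hyperplane hω _ p).iteratedDeriv_two_integral (by fun_prop) t
    _ = ∫ y : (ℝ ∙ ω)ᗮ, iteratedFDeriv ℝ 2 (fun x => u (t, x)) (↑y + p • ω) ![ω, ω]
          ∂μH[(d : ℝ) - 1] := by
        simp_rw [hwave, laplacian_eq_innerProductSpace_laplacian hut]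
        exact integral_laplacian_comp_subtype_add_smul hω hut (hcone.hasCompactSupport t) p
    _ = ∫ y : (ℝ ∙ ω)ᗮ, iteratedDeriv 2 (fun q => u (t, ↑y + q • ω)) p ∂μH[(d : ℝ) - 1] := by
        simp_rw [iteratedDeriv_two_comp_add_smul hut]
    _ = _ := ((hcone.comp_normal_coordinate hω _ t).iteratedDeriv_two_integral (by fun_prop) p).symm

/-- The Radon projection (in a fixed direction `ω`) of a solution to the free-space wave
equation satisfies the one-dimensional wave equation. -/
theorem radon_of_wave_solves_1d_wave {d : ℕ} (hd : 2 ≤ d)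
    (u : ℝ × EuclideanSpace ℝ (Fin d) → ℝ) (hu : ContDiff ℝ (⊤ : ℕ∞) u)
    (hwave : ∀ t : ℝ, ∀ x : EuclideanSpace ℝ (Fin d),
      iteratedDeriv 2 (fun s => u (s, x)) t = laplacian (fun y => u (t, y)) x)
    (R : ℝ) (hR : 0 < R)
    (hsupp : ∀ t : ℝ, ∀ x : EuclideanSpace ℝ (Fin d), R + |t| ≤ ‖x‖ → u (t, x) = 0) :
    ∀ ω ∈ sphere (0 : EuclideanSpace ℝ (Fin d)) 1, ∀ t p : ℝ,
      iteratedDeriv 2 (fun s => radonTransform (fun y => u (s, y)) ω p) t =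
        iteratedDeriv 2 (fun q => radonTransform (fun y => u (t, y)) ω q) p :=
  radon_of_wave_solves_1d_wave_general u hu hwave R hsupp
end

section
/- (Recovery of the Radon projections from half-time wave data.) Let d ≥ 2, let f : ℝ^d → ℝ be C^∞ with compact support contained in the open unit ball B, and let u : ℝ × ℝ^d → ℝ be C^∞, satisfy the free-space wave equation ∂²u/∂t² = Δu everywhere, satisfy u(0,x) = f(x) and ∂u/∂t(0,x) = 0 for all x, and satisfy u(t,x) = 0 whenever |x| ≥ 1 + |t|. Then for every unit vector ω ∈ S: [R u(1,·)](ω,p) = ½ [Rf](ω, p−1) for all p ∈ [1,2], and [R u(1,·)](ω,p) = ½ [Rf](ω, p+1) for all p ∈ [−2,−1]; equivalently, [Rf](ω,p) = 2 [R u(1,·)](ω, p+1) for p ∈ [0,1] and [Rf](ω,p) = 2 [R u(1,·)](ω, p−1) for p ∈ [−1,0]. -/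
/-!
Fix `ω` and parametrize the hyperplanes `⟪x, ω⟫ = q` as `y ↦ ψ y + q • ω`, where `ψ` maps `ℝⁿ`
isometrically onto `ω⊥` (built from an orthonormal basis whose last vector is `ω`). Up to a
constant factor (both `μH[n]` and Lebesgue measure are Haar measures on `ℝⁿ`), the Radon
transform of `u (t, ·)` at `(ω, q)` is then `U (t, q) = ∫ u (t, ψ y + q • ω) dy`. Differentiating under the integral sign, `U_tt - U_qq` is the
integral over the hyperplane of the tangential Laplacian of `u (t, ·)`, which vanishes because
`u (t, ·)` has compact support. Hence `U` solves the one-dimensional wave equation with zero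
initial velocity, and d'Alembert's formula gives
`[R u(1,·)](ω, p) = ([Rf](ω, p + 1) + [Rf](ω, p - 1)) / 2`. As `f` vanishes outside the unit
ball, `[Rf](ω, q) = 0` for `|q| ≥ 1`, so on each of the four intervals one of the terms drops out.
-/

open MeasureTheory Metric Set

open Filter Topology

section SecondDerivative

variable {E F G : Type*} [NormedAddCommGroup E] [NormedSpace ℝ E]
  [NormedAddCommGroup F] [NormedSpace ℝ F] [NormedAddCommGroup G] [NormedSpace ℝ G]

theorem fderiv_fderiv_comp_affine {V : F → G} (hV : ContDiff ℝ 2 V) (L : E →L[ℝ] F) (a : F)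
    (x v w : E) :
    fderiv ℝ (fderiv ℝ fun x => V (a + L x)) x v w
      = fderiv ℝ (fderiv ℝ V) (a + L x) (L v) (L w) := by
  have hV' : ContDiff ℝ 2 fun y => V (a + y) := hV.comp (contDiff_const.add contDiff_id)
  have h := congrArg (· ![v, w]) (L.iteratedFDeriv_comp_right hV' x le_rfl)
  simp only [Function.comp_def, iteratedFDeriv_comp_add_left, iteratedFDeriv_two_apply] at h
  rw [ContinuousMultilinearMap.compContinuousLinearMap_apply, iteratedFDeriv_two_apply] at h
  exact h

theorem fderiv_comp_affine {V : F → G} (L : E →L[ℝ] F) (a : F) {x : E}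
    (hV : DifferentiableAt ℝ V (a + L x)) (v : E) :
    fderiv ℝ (fun x => V (a + L x)) x v = fderiv ℝ V (a + L x) (L v) :=
  congrArg (· v) (hV.hasFDerivAt.comp x (L.hasFDerivAt.const_add a)).fderiv

theorem hasDerivAt_comp_add_smul {V : F → G} {z w : F} {s : ℝ}
    (hV : DifferentiableAt ℝ V (z + s • w)) :
    HasDerivAt (fun s : ℝ => V (z + s • w)) (fderiv ℝ V (z + s • w) w) s :=
  hV.hasFDerivAt.comp_hasDerivAt s (by simpa using ((hasDerivAt_id s).smul_const w).const_add z)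

theorem iteratedDeriv_two_eq_fderiv_fderiv (g : ℝ → G) (s : ℝ) :
    iteratedDeriv 2 g s = fderiv ℝ (fderiv ℝ g) s 1 1 := by
  rw [iteratedDeriv_eq_iteratedFDeriv, iteratedFDeriv_two_apply]

theorem iteratedDeriv_two_comp_line {V : F → G} (hV : ContDiff ℝ 2 V) (z w : F) (s : ℝ) :
    iteratedDeriv 2 (fun s : ℝ => V (z + s • w)) s = fderiv ℝ (fderiv ℝ V) (z + s • w) w w := by
  have h := fderiv_fderiv_comp_affine hV ((1 : ℝ →L[ℝ] ℝ).smulRight w) z s 1 1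
  simp only [ContinuousLinearMap.smulRight_apply, one_apply_eq_self, one_smul] at h
  rwa [iteratedDeriv_two_eq_fderiv_fderiv]

theorem iteratedDeriv_two_comp_prodMk_left {V : ℝ × F → G} (hV : ContDiff ℝ 2 V) (t : ℝ)
    (x : F) :
    iteratedDeriv 2 (fun s => V (s, x)) t = fderiv ℝ (fderiv ℝ V) (t, x) (1, 0) (1, 0) := by
  simpa using iteratedDeriv_two_comp_line hV (0, x) (1, 0) t

theorem fderiv_fderiv_comp_prodMk_right {V : E × F → G} (hV : ContDiff ℝ 2 V) (t : E)
    (x v w : F) :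
    fderiv ℝ (fderiv ℝ fun x => V (t, x)) x v w = fderiv ℝ (fderiv ℝ V) (t, x) (0, v) (0, w) := by
  simpa using fderiv_fderiv_comp_affine hV (ContinuousLinearMap.inr ℝ E F) (t, 0) x v w

theorem fderiv_fderiv_apply {f : E → G} {x : E} (hf : DifferentiableAt ℝ (fderiv ℝ f) x)
    (v w : E) : fderiv ℝ (fderiv ℝ f) x v w = fderiv ℝ (fun x => fderiv ℝ f x w) x v := by
  simp [fderiv_clm_apply hf (differentiableAt_const w)]

theorem IsSymmSndFDerivAt.fderiv_fderiv_add_sub {f : E → G} {x : E} (hf : IsSymmSndFDerivAt ℝ f x)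
    (v w : E) :
    fderiv ℝ (fderiv ℝ f) x (v + w) (v - w)
      = fderiv ℝ (fderiv ℝ f) x v v - fderiv ℝ (fderiv ℝ f) x w w := by
  simp only [map_add, map_sub, add_apply, hf.eq w v]
  abel

end SecondDerivative

open scoped Laplacian in
theorem laplacian_eq_sum_fderiv_fderiv {n : ℕ} {v : EuclideanSpace ℝ (Fin n) → ℝ}
    (hv : ContDiff ℝ 2 v) {ι : Type*} [Fintype ι]
    (b : OrthonormalBasis ι ℝ (EuclideanSpace ℝ (Fin n))) (x : EuclideanSpace ℝ (Fin n)) :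
    laplacian v x = ∑ i, fderiv ℝ (fderiv ℝ v) x (b i) (b i) := by
  -- `Δ` is Mathlib's basis-free Laplacian
  have hΔ : Δ v x = laplacian v x := by
    simp [InnerProductSpace.laplacian_eq_iteratedFDeriv_orthonormalBasis v
      (EuclideanSpace.basisFun (Fin n) ℝ), iteratedFDeriv_two_apply, laplacian,
      iteratedDeriv_two_comp_line hv]
  simp [← hΔ, InnerProductSpace.laplacian_eq_iteratedFDeriv_orthonormalBasis v b,
    iteratedFDeriv_two_apply]

section ParametricIntegral

open scoped ContDiff

variable {P Y : Type*} [NormedAddCommGroup P] [NormedSpace ℝ P]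

theorem eventually_fderiv_eq_zero {F : P → Y → ℝ} {K : Set Y} {p₀ : P}
    (hsupp : ∀ᶠ p in 𝓝 p₀, ∀ y ∉ K, F p y = 0) :
    ∀ᶠ p in 𝓝 p₀, ∀ y ∉ K, fderiv ℝ (F · y) p = 0 := by
  filter_upwards [hsupp.eventually_nhds] with p hp y hy
  have hzero : (F · y) =ᶠ[𝓝 p] fun _ => 0 := hp.mono fun _ h => h y hy
  rw [hzero.fderiv_eq, fderiv_const_apply]

variable [NormedAddCommGroup Y]

def HasLocallyUniformCompactSupport (F : P → Y → ℝ) : Prop :=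
  ∀ p₀, ∃ K, IsCompact K ∧ ∀ᶠ p in 𝓝 p₀, ∀ y ∉ K, F p y = 0

theorem HasLocallyUniformCompactSupport.fderiv_apply {F : P → Y → ℝ}
    (hsupp : HasLocallyUniformCompactSupport F) (v : P) :
    HasLocallyUniformCompactSupport fun p y => fderiv ℝ (F · y) p v := by
  intro p₀
  obtain ⟨K, hK, hp₀⟩ := hsupp p₀
  refine ⟨K, hK, (eventually_fderiv_eq_zero hp₀).mono fun p hp y hy => ?_⟩
  simp [hp y hy]

variable [NormedSpace ℝ Y]

theorem ContDiff.fderiv_uncurry {n : WithTop ℕ∞} {F : P → Y → ℝ}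
    (hF : ContDiff ℝ (n + 1) (Function.uncurry F)) :
    ContDiff ℝ n (Function.uncurry fun p y => fderiv ℝ (F · y) p) := by
  have hF' : ContDiff ℝ (n + 1) fun w : (P × Y) × P => F w.2 w.1.2 :=
    hF.comp (contDiff_snd.prodMk (contDiff_snd.comp contDiff_fst))
  exact hF'.fderiv (f := fun z p => F p z.2) contDiff_fst le_rfl

variable [FiniteDimensional ℝ P] [MeasurableSpace Y] [BorelSpace Y] {μ : Measure Y}
  [IsFiniteMeasureOnCompacts μ]

theorem hasFDerivAt_integral_of_contDiff {F : P → Y → ℝ}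
    (hF : ContDiff ℝ 1 (Function.uncurry F)) {K : Set Y} (hK : IsCompact K) {p₀ : P}
    (hsupp : ∀ᶠ p in 𝓝 p₀, ∀ y ∉ K, F p y = 0) :
    HasFDerivAt (fun p => ∫ y, F p y ∂μ) (∫ y, fderiv ℝ (F · y) p₀ ∂μ) p₀ := by
  have hF' := (hF.fderiv_uncurry (n := 0)).continuous
  obtain ⟨r, hr, hball⟩ := nhds_basis_closedBall.mem_iff.1 (eventually_fderiv_eq_zero hsupp)
  obtain ⟨C, hC⟩ := ((isCompact_closedBall p₀ r).prod hK).exists_bound_of_continuousOn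
    hF'.continuousOn
  have hcont (p : P) : Continuous (F p) :=
    hF.continuous.comp (continuous_const.prodMk continuous_id)
  refine hasFDerivAt_integral_of_dominated_of_fderiv_le (closedBall_mem_nhds p₀ hr)
    (F' := fun p y => fderiv ℝ (F · y) p) (bound := K.indicator fun _ => C)
    (.of_forall fun p => (hcont p).aestronglyMeasurable)
    ((hcont p₀).integrable_of_hasCompactSupport (.intro hK fun y hy => hsupp.self_of_nhds y hy))
    (hF'.comp (continuous_const.prodMk continuous_id)).aestronglyMeasurable
    (.of_forall fun y p hp => ?_)
    ((integrableOn_const hK.measure_lt_top.ne).integrable_indicator hK.measurableSet)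
    (.of_forall fun y p _ => ?_)
  · by_cases hy : y ∈ K
    · simpa [hy] using hC (p, y) ⟨hp, hy⟩
    · simp [hy, hball hp y hy]
  · exact ((hF.differentiable one_ne_zero).comp
      (differentiable_id.prodMk (differentiable_const y)) p).hasFDerivAt

theorem fderiv_integral_apply {F : P → Y → ℝ} (hF : ContDiff ℝ 1 (Function.uncurry F))
    {K : Set Y} (hK : IsCompact K) {p₀ : P} (hsupp : ∀ᶠ p in 𝓝 p₀, ∀ y ∉ K, F p y = 0)
    (v : P) :
    fderiv ℝ (fun p => ∫ y, F p y ∂μ) p₀ v = ∫ y, fderiv ℝ (F · y) p₀ v ∂μ := by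
  have hF' : Continuous fun y => fderiv ℝ (F · y) p₀ :=
    (hF.fderiv_uncurry (n := 0)).continuous.comp (continuous_const.prodMk continuous_id)
  rw [(hasFDerivAt_integral_of_contDiff hF hK hsupp).fderiv,
    ContinuousLinearMap.integral_apply (hF'.integrable_of_hasCompactSupport
      (.intro hK fun y hy => (eventually_fderiv_eq_zero hsupp).self_of_nhds y hy))]

theorem contDiff_integral_of_contDiff {F : P → Y → ℝ} (hF : ContDiff ℝ ∞ (Function.uncurry F))
    (hsupp : HasLocallyUniformCompactSupport F) :
    ContDiff ℝ ∞ fun p => ∫ y, F p y ∂μ := by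
  refine contDiff_infty.2 fun n => ?_
  induction n generalizing F with
  | zero =>
    refine contDiff_zero.2 (continuous_iff_continuousAt.2 fun p₀ => ?_)
    obtain ⟨K, hK, hp₀⟩ := hsupp p₀
    exact (hasFDerivAt_integral_of_contDiff (hF.of_le (by simp)) hK hp₀).continuousAt
  | succ n ih =>
    rw [Nat.cast_succ]
    refine contDiff_succ_iff_fderiv_apply.2 ⟨fun p₀ => ?_, by simp, fun v => ?_⟩
    · obtain ⟨K, hK, hp₀⟩ := hsupp p₀
      exact (hasFDerivAt_integral_of_contDiff (hF.of_le (by simp)) hK hp₀).differentiableAt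
    · have hFv : ContDiff ℝ ∞ (Function.uncurry fun p y => fderiv ℝ (F · y) p v) :=
        (hF.fderiv_uncurry (n := ∞)).clm_apply contDiff_const
      convert ih hFv (hsupp.fderiv_apply v) using 1
      ext p₀
      obtain ⟨K, hK, hp₀⟩ := hsupp p₀
      exact fderiv_integral_apply (hF.of_le (by simp)) hK hp₀ v

theorem fderiv_fderiv_integral_apply {F : P → Y → ℝ} (hF : ContDiff ℝ ∞ (Function.uncurry F))
    (hsupp : HasLocallyUniformCompactSupport F) (p v w : P) :
    fderiv ℝ (fderiv ℝ fun p => ∫ y, F p y ∂μ) p v w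
      = ∫ y, fderiv ℝ (fderiv ℝ (F · y)) p v w ∂μ := by
  have hI := contDiff_integral_of_contDiff hF hsupp (μ := μ)
  have hFw : ContDiff ℝ ∞ (Function.uncurry fun p y => fderiv ℝ (F · y) p w) :=
    (hF.fderiv_uncurry (n := ∞)).clm_apply contDiff_const
  have hI' : (fun p => fderiv ℝ (fun p => ∫ y, F p y ∂μ) p w)
      = fun p => ∫ y, fderiv ℝ (F · y) p w ∂μ := by
    ext p
    obtain ⟨K, hK, hp⟩ := hsupp p
    exact fderiv_integral_apply (hF.of_le (by simp)) hK hp w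
  obtain ⟨K, hK, hp⟩ := hsupp.fderiv_apply w p
  rw [fderiv_fderiv_apply ((hI.fderiv_right (m := ∞) (by simp)).differentiable (by simp) p), hI',
    fderiv_integral_apply (hFw.of_le (by simp)) hK hp v]
  congr 1
  ext y
  have hFy : ContDiff ℝ ∞ (F · y) := hF.comp (contDiff_id.prodMk contDiff_const)
  rw [fderiv_fderiv_apply ((hFy.fderiv_right (m := ∞) (by simp)).differentiable (by simp) p)]

end ParametricIntegral

theorem integral_fderiv_apply_eq_zero_s7 {E : Type*} [NormedAddCommGroup E] [NormedSpace ℝ E]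
    [FiniteDimensional ℝ E] [MeasurableSpace E] [BorelSpace E] {μ : Measure E}
    [μ.IsAddHaarMeasure] {g : E → ℝ} (hg : ContDiff ℝ 1 g) (hgc : HasCompactSupport g) (v : E) :
    ∫ x, fderiv ℝ g x v ∂μ = 0 := by
  have hg' : Integrable (fun x => fderiv ℝ g x v) μ :=
    ((hg.continuous_fderiv one_ne_zero).clm_apply continuous_const).integrable_of_hasCompactSupport
      (hgc.fderiv_apply ℝ v)
  simpa using integral_mul_fderiv_eq_neg_fderiv_mul_of_integrable (f := fun _ => (1 : ℝ))
    (g := g) (v := v) (μ := μ) (by simp) (by simpa using hg')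
    (by simpa using hg.continuous.integrable_of_hasCompactSupport hgc)
    (fun _ _ => differentiableAt_const _) (fun x _ => hg.differentiable one_ne_zero x)

open scoped Laplacian in
theorem integral_laplacian_eq_zero {E : Type*} [NormedAddCommGroup E] [InnerProductSpace ℝ E]
    [FiniteDimensional ℝ E] [MeasurableSpace E] [BorelSpace E] {μ : Measure E}
    [μ.IsAddHaarMeasure] {h : E → ℝ} (hh : ContDiff ℝ 2 h) (hc : HasCompactSupport h) :
    ∫ x, Δ h x ∂μ = 0 := by
  have hd (w : E) : ContDiff ℝ 1 fun x => fderiv ℝ h x w :=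
    (hh.fderiv_right (m := 1) le_rfl).clm_apply contDiff_const
  have hΔ (x : E) : Δ h x = ∑ i, fderiv ℝ (fun x => fderiv ℝ h x (stdOrthonormalBasis ℝ E i)) x
      (stdOrthonormalBasis ℝ E i) := by
    simp [InnerProductSpace.laplacian_eq_iteratedFDeriv_stdOrthonormalBasis,
      iteratedFDeriv_two_apply,
      fderiv_fderiv_apply ((hh.fderiv_right (m := 1) le_rfl).differentiable one_ne_zero x)]
  simp_rw [hΔ]
  rw [integral_finsetSum _ fun i _ => (((hd _).continuous_fderiv one_ne_zero).clm_apply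
    continuous_const).integrable_of_hasCompactSupport ((hc.fderiv_apply ℝ _).fderiv_apply ℝ _)]
  exact Finset.sum_eq_zero fun i _ => integral_fderiv_apply_eq_zero_s7 (hd _)
    (hc.fderiv_apply ℝ _) _

theorem fderiv_one_one_eq_of_wave {U : ℝ × ℝ → ℝ} (hU : ContDiff ℝ 2 U)
    (hwave : ∀ z, fderiv ℝ (fderiv ℝ U) z (1, 0) (1, 0) = fderiv ℝ (fderiv ℝ U) z (0, 1) (0, 1))
    (q₀ σ : ℝ) : fderiv ℝ U (σ, q₀ - σ) (1, 1) = fderiv ℝ U (0, q₀) (1, 1) := by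
  have hU₂ : Differentiable ℝ (fderiv ℝ U) :=
    (hU.fderiv_right (m := 1) le_rfl).differentiable one_ne_zero
  -- the derivative of `∂ₜU + ∂_qU` in the direction `(1, -1)` is `U_tt - U_qq`
  have hderiv (σ : ℝ) :
      HasDerivAt (fun σ : ℝ => fderiv ℝ U ((0, q₀) + σ • (1, -1)) (1, 1)) 0 σ := by
    refine (hasDerivAt_comp_add_smul ((hU₂.clm_apply (differentiable_const _)) _)).congr_deriv ?_
    rw [fderiv_clm_apply (hU₂ _) (differentiableAt_const _)]
    set z := (0, q₀) + σ • ((1 : ℝ), (-1 : ℝ))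
    simp only [fderiv_const_apply, ContinuousLinearMap.comp_zero, zero_add,
      ContinuousLinearMap.flip_apply]
    rw [show ((1 : ℝ), (-1 : ℝ)) = (1, 0) - (0, 1) by simp,
      show ((1 : ℝ), (1 : ℝ)) = (1, 0) + (0, 1) by simp, map_sub, map_add, sub_apply, sub_apply,
      hwave, (hU.contDiffAt.isSymmSndFDerivAt (by simp)).eq (1, 0) (0, 1)]
    ring
  have hconst := is_const_of_deriv_eq_zero (fun σ => (hderiv σ).differentiableAt)
    (fun σ => (hderiv σ).deriv) σ 0
  rwa [show (0, q₀) + σ • ((1 : ℝ), (-1 : ℝ)) = (σ, q₀ - σ) by ext <;> simp [sub_eq_add_neg],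
    zero_smul, add_zero] at hconst

theorem dAlembert_formula {U : ℝ × ℝ → ℝ} (hU : ContDiff ℝ 2 U)
    (hwave : ∀ z, fderiv ℝ (fderiv ℝ U) z (1, 0) (1, 0) = fderiv ℝ (fderiv ℝ U) z (0, 1) (0, 1))
    (hvel : ∀ q, fderiv ℝ U (0, q) (1, 0) = 0) (t q : ℝ) :
    U (t, q) = (U (0, q + t) + U (0, q - t)) / 2 := by
  have hU₁ : Differentiable ℝ U := hU.differentiable (by simp)
  have hF (q : ℝ) : HasDerivAt (fun q => U (0, q)) (fderiv ℝ U (0, q) (0, 1)) q := by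
    simpa using hasDerivAt_comp_add_smul (z := ((0 : ℝ), (0 : ℝ))) (w := ((0 : ℝ), (1 : ℝ)))
      (s := q) (hU₁ _)
  -- the slope of `U` along the characteristic `s ↦ (s, q - t + s)` is `F' (q - t + 2 s)`,
  -- where `F = U (0, ·)`, as `∂ₜU + ∂_qU` is constant along the other family of characteristics
  have hpath (s : ℝ) : HasDerivAt (fun s => U (s, q - t + s) - U (0, q - t + 2 * s) / 2) 0 s := by
    have h1 : HasDerivAt (fun s => U (s, q - t + s)) (fderiv ℝ U (s, q - t + s) (1, 1)) s := by
      simpa using hasDerivAt_comp_add_smul (z := ((0 : ℝ), q - t)) (w := ((1 : ℝ), (1 : ℝ)))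
        (s := s) (hU₁ _)
    have h2 : HasDerivAt (fun s => U (0, q - t + 2 * s) / 2)
        (fderiv ℝ U (0, q - t + 2 * s) (0, 1)) s := by
      have := ((hF _).comp s (((hasDerivAt_id s).const_mul 2).const_add (q - t))).div_const 2
      simpa [Function.comp_def] using this
    have hD := fderiv_one_one_eq_of_wave hU hwave (q - t + 2 * s) s
    rw [show q - t + 2 * s - s = q - t + s by ring] at hD
    have hvel' (q₀ : ℝ) : fderiv ℝ U (0, q₀) (1, 1) = fderiv ℝ U (0, q₀) (0, 1) := by
      rw [show ((1 : ℝ), (1 : ℝ)) = (1, 0) + (0, 1) by simp, map_add, hvel, zero_add]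
    exact (h1.sub h2).congr_deriv (by rw [hD, hvel', sub_self])
  have := is_const_of_deriv_eq_zero (fun s => (hpath s).differentiableAt)
    (fun s => (hpath s).deriv) t 0
  rw [show q - t + t = q by ring, show q - t + 2 * t = q + t by ring, mul_zero, add_zero]
    at this
  linarith

noncomputable def EuclideanSpace.snocZero (n : ℕ) :
    EuclideanSpace ℝ (Fin n) →ₗᵢ[ℝ] EuclideanSpace ℝ (Fin (n + 1)) where
  toFun y := WithLp.toLp 2 (Fin.snoc y 0)
  map_add' y z := by
    ext i
    induction i using Fin.lastCases <;> simp
  map_smul' c y := by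
    ext i
    induction i using Fin.lastCases <;> simp
  norm_map' y := by
    simp [EuclideanSpace.norm_eq, Fin.sum_univ_castSucc]

theorem exists_orthonormalBasis_last_eq {n : ℕ} {ω : EuclideanSpace ℝ (Fin (n + 1))}
    (hω : ‖ω‖ = 1) :
    ∃ b : OrthonormalBasis (Fin (n + 1)) ℝ (EuclideanSpace ℝ (Fin (n + 1))),
      b (Fin.last n) = ω := by
  have horth : Orthonormal ℝ (({Fin.last n} : Set (Fin (n + 1))).domRestrict fun _ => ω) :=
    ⟨fun _ => hω, fun i j hij => (hij (Subsingleton.elim i j)).elim⟩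
  obtain ⟨b, hb⟩ := horth.exists_orthonormalBasis_extension_of_card_eq (by simp)
  exact ⟨b, hb _ rfl⟩

section HyperplaneChart

variable {n : ℕ} (b : OrthonormalBasis (Fin (n + 1)) ℝ (EuclideanSpace ℝ (Fin (n + 1))))

noncomputable def hyperplaneChart :
    EuclideanSpace ℝ (Fin n) →ₗᵢ[ℝ] EuclideanSpace ℝ (Fin (n + 1)) :=
  b.repr.symm.toLinearIsometry.comp (EuclideanSpace.snocZero n)

theorem hyperplaneChart_single (j : Fin n) :
    hyperplaneChart b (EuclideanSpace.single j 1) = b (Fin.castSucc j) := by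
  have : EuclideanSpace.snocZero n (EuclideanSpace.single j 1)
      = EuclideanSpace.single (Fin.castSucc j) 1 := by
    ext i
    induction i using Fin.lastCases <;> simp [EuclideanSpace.snocZero, Pi.single_apply,
      (Fin.castSucc_lt_last j).ne']
  simp [hyperplaneChart, this]

theorem repr_hyperplaneChart_add_smul (y : EuclideanSpace ℝ (Fin n)) (q : ℝ) :
    b.repr (hyperplaneChart b y + q • b (Fin.last n)) = WithLp.toLp 2 (Fin.snoc y q) := by
  ext i
  induction i using Fin.lastCases <;> simp [hyperplaneChart, EuclideanSpace.snocZero,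
    (Fin.castSucc_lt_last _).ne]

theorem range_hyperplaneChart_add_smul (q : ℝ) :
    range (fun y => hyperplaneChart b y + q • b (Fin.last n))
      = {x | inner ℝ x (b (Fin.last n)) = q} := by
  ext x
  constructor
  · rintro ⟨y, rfl⟩
    change inner ℝ _ _ = q
    rw [← b.repr.inner_map_map, repr_hyperplaneChart_add_smul, b.repr_self]
    simp [EuclideanSpace.inner_single_right]
  · intro hx
    refine ⟨WithLp.toLp 2 fun j => b.repr x (Fin.castSucc j), b.repr.injective ?_⟩
    rw [repr_hyperplaneChart_add_smul]
    ext i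
    induction i using Fin.lastCases
    · simp [b.repr_apply_apply, ← hx.out, real_inner_comm]
    · simp

theorem laplacian_eq_sum_hyperplaneChart {v : EuclideanSpace ℝ (Fin (n + 1)) → ℝ}
    (hv : ContDiff ℝ 2 v) (x : EuclideanSpace ℝ (Fin (n + 1))) :
    laplacian v x = ∑ j, fderiv ℝ (fderiv ℝ v) x (hyperplaneChart b (EuclideanSpace.single j 1))
        (hyperplaneChart b (EuclideanSpace.single j 1))
      + fderiv ℝ (fderiv ℝ v) x (b (Fin.last n)) (b (Fin.last n)) := by
  simp [laplacian_eq_sum_fderiv_fderiv hv b, Fin.sum_univ_castSucc, hyperplaneChart_single]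

theorem norm_sub_abs_le_norm_hyperplaneChart_add_smul (y : EuclideanSpace ℝ (Fin n)) (q : ℝ) :
    ‖y‖ - |q| ≤ ‖hyperplaneChart b y + q • b (Fin.last n)‖ := by
  have h := norm_sub_norm_le (hyperplaneChart b y) (-(q • b (Fin.last n)))
  simp only [sub_neg_eq_add, norm_neg, norm_smul, b.orthonormal.1, LinearIsometry.norm_map,
    Real.norm_eq_abs, mul_one] at h
  exact h

theorem hasCompactSupport_comp_hyperplaneChart {v : EuclideanSpace ℝ (Fin (n + 1)) → ℝ} {R : ℝ}
    (hv : ∀ x, R ≤ ‖x‖ → v x = 0) (q : ℝ) :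
    HasCompactSupport fun y => v (hyperplaneChart b y + q • b (Fin.last n)) :=
  .intro (isCompact_closedBall 0 (R + |q|)) fun y hy => hv _ <| by
    have := norm_sub_abs_le_norm_hyperplaneChart_add_smul (b := b) y q
    simp only [mem_closedBall, dist_zero_right, not_le] at hy
    linarith

open scoped NNReal in
theorem exists_radonTransform_eq_integral : ∃ κ : ℝ, ∀ (g : EuclideanSpace ℝ (Fin (n + 1)) → ℝ)
    (q : ℝ), radonTransform g (b (Fin.last n)) q
      = κ * ∫ y, g (hyperplaneChart b y + q • b (Fin.last n)) := by
  obtain ⟨κ, hκ⟩ : ∃ κ : ℝ≥0, (μH[n] : Measure (EuclideanSpace ℝ (Fin n))) = κ • volume :=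
    ⟨_, Measure.isAddLeftInvariant_eq_smul _ _⟩
  refine ⟨κ, fun g q => ?_⟩
  have hΦ : Isometry fun y => hyperplaneChart b y + q • b (Fin.last n) :=
    (isometry_add_right _).comp (hyperplaneChart b).isometry
  rw [radonTransform, show ((n + 1 : ℕ) : ℝ) - 1 = n by push_cast; ring,
    ← range_hyperplaneChart_add_smul, ← hΦ.map_hausdorffMeasure (Or.inl n.cast_nonneg),
    hΦ.isClosedEmbedding.measurableEmbedding.integral_map, hκ, integral_smul_nnreal_measure]
  rfl

open scoped Laplacian in
theorem laplacian_comp_hyperplaneChart {v : EuclideanSpace ℝ (Fin (n + 1)) → ℝ}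
    (hv : ContDiff ℝ 2 v) (q : ℝ) (y : EuclideanSpace ℝ (Fin n)) :
    Δ (fun y => v (hyperplaneChart b y + q • b (Fin.last n))) y
      = laplacian v (hyperplaneChart b y + q • b (Fin.last n))
        - fderiv ℝ (fderiv ℝ v) (hyperplaneChart b y + q • b (Fin.last n)) (b (Fin.last n))
          (b (Fin.last n)) := by
  have hcomm : (fun y => v (hyperplaneChart b y + q • b (Fin.last n)))
      = fun y => v (q • b (Fin.last n) + (hyperplaneChart b).toContinuousLinearMap y) := by
    ext y
    simp [add_comm]
  rw [laplacian_eq_sum_hyperplaneChart b hv, add_sub_cancel_right, hcomm,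
    InnerProductSpace.laplacian_eq_iteratedFDeriv_orthonormalBasis _
      (EuclideanSpace.basisFun (Fin n) ℝ)]
  refine Finset.sum_congr rfl fun j _ => ?_
  rw [iteratedFDeriv_two_apply]
  simp only [Matrix.cons_val_zero, Matrix.cons_val_one, Matrix.cons_val_fin_one,
    EuclideanSpace.basisFun_apply, fderiv_fderiv_comp_affine hv]
  simp [add_comm]

end HyperplaneChart

section PlaneIntegral

variable {n : ℕ} (b : OrthonormalBasis (Fin (n + 1)) ℝ (EuclideanSpace ℝ (Fin (n + 1))))

/-- Up to the constant of `exists_radonTransform_eq_integral`, `planeIntegral b W (t, q)` is the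
Radon transform of `W (t, ·)` at `(b (Fin.last n), q)`. -/
noncomputable def planeIntegral (W : ℝ × EuclideanSpace ℝ (Fin (n + 1)) → ℝ) : ℝ × ℝ → ℝ :=
  fun τ => ∫ y, W (τ.1, hyperplaneChart b y + τ.2 • b (Fin.last n))

variable {b}

theorem hasLocallyUniformCompactSupport_planeIntegrand {W : ℝ × EuclideanSpace ℝ (Fin (n + 1)) → ℝ}
    (hW : ∀ t x, 1 + |t| ≤ ‖x‖ → W (t, x) = 0) :
    HasLocallyUniformCompactSupport fun (τ : ℝ × ℝ) y =>
      W (τ.1, hyperplaneChart b y + τ.2 • b (Fin.last n)) := by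
  intro τ₀
  refine ⟨closedBall 0 (3 + |τ₀.1| + |τ₀.2|), isCompact_closedBall _ _, ?_⟩
  filter_upwards [ball_mem_nhds τ₀ one_pos] with τ hτ y hy
  apply hW
  have := norm_sub_abs_le_norm_hyperplaneChart_add_smul (b := b) y τ.2
  rw [mem_ball, Prod.dist_eq, max_lt_iff, Real.dist_eq, Real.dist_eq] at hτ
  simp only [mem_closedBall, dist_zero_right, not_le] at hy
  have h1 := abs_sub_abs_le_abs_sub τ.1 τ₀.1
  have h2 := abs_sub_abs_le_abs_sub τ.2 τ₀.2
  linarith [hτ.1, hτ.2]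

open scoped ContDiff

theorem contDiff_planeIntegrand {W : ℝ × EuclideanSpace ℝ (Fin (n + 1)) → ℝ}
    (hW : ContDiff ℝ ∞ W) :
    ContDiff ℝ ∞ (Function.uncurry fun (τ : ℝ × ℝ) y =>
      W (τ.1, hyperplaneChart b y + τ.2 • b (Fin.last n))) :=
  hW.comp ((contDiff_fst.comp contDiff_fst).prodMk
    (((hyperplaneChart b).toContinuousLinearMap.contDiff.comp contDiff_snd).add
      ((contDiff_snd.comp contDiff_fst).smul contDiff_const)))

theorem contDiff_planeIntegral {W : ℝ × EuclideanSpace ℝ (Fin (n + 1)) → ℝ}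
    (hW : ContDiff ℝ ∞ W) (hsupp : ∀ t x, 1 + |t| ≤ ‖x‖ → W (t, x) = 0) :
    ContDiff ℝ ∞ (planeIntegral b W) :=
  contDiff_integral_of_contDiff (contDiff_planeIntegrand hW)
    (hasLocallyUniformCompactSupport_planeIntegrand hsupp)

theorem planeIntegrand_eq_comp_affine (W : ℝ × EuclideanSpace ℝ (Fin (n + 1)) → ℝ)
    (y : EuclideanSpace ℝ (Fin n)) :
    (fun τ : ℝ × ℝ => W (τ.1, hyperplaneChart b y + τ.2 • b (Fin.last n)))
      = fun τ => W ((0, hyperplaneChart b y) + ((ContinuousLinearMap.fst ℝ ℝ ℝ).prod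
          ((ContinuousLinearMap.snd ℝ ℝ ℝ).smulRight (b (Fin.last n)))) τ) := by
  ext τ
  simp

theorem fderiv_planeIntegral_apply {W : ℝ × EuclideanSpace ℝ (Fin (n + 1)) → ℝ}
    (hW : ContDiff ℝ ∞ W) (hsupp : ∀ t x, 1 + |t| ≤ ‖x‖ → W (t, x) = 0) (τ v : ℝ × ℝ) :
    fderiv ℝ (planeIntegral b W) τ v
      = ∫ y, fderiv ℝ W (τ.1, hyperplaneChart b y + τ.2 • b (Fin.last n))
          (v.1, v.2 • b (Fin.last n)) := by
  obtain ⟨K, hK, hτ⟩ := hasLocallyUniformCompactSupport_planeIntegrand hsupp τ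
  unfold planeIntegral
  rw [fderiv_integral_apply ((contDiff_planeIntegrand hW).of_le (by simp)) hK hτ]
  congr 1
  ext y
  rw [planeIntegrand_eq_comp_affine, fderiv_comp_affine _ _ (hW.differentiable (by simp) _)]
  simp

theorem fderiv_fderiv_planeIntegral_apply {W : ℝ × EuclideanSpace ℝ (Fin (n + 1)) → ℝ}
    (hW : ContDiff ℝ ∞ W) (hsupp : ∀ t x, 1 + |t| ≤ ‖x‖ → W (t, x) = 0) (τ v w : ℝ × ℝ) :
    fderiv ℝ (fderiv ℝ (planeIntegral b W)) τ v w
      = ∫ y, fderiv ℝ (fderiv ℝ W) (τ.1, hyperplaneChart b y + τ.2 • b (Fin.last n))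
          (v.1, v.2 • b (Fin.last n)) (w.1, w.2 • b (Fin.last n)) := by
  unfold planeIntegral
  rw [fderiv_fderiv_integral_apply (contDiff_planeIntegrand hW)
    (hasLocallyUniformCompactSupport_planeIntegrand hsupp)]
  congr 1
  ext y
  rw [planeIntegrand_eq_comp_affine, fderiv_fderiv_comp_affine (contDiff_infty.1 hW 2)]
  simp

end PlaneIntegral

section Wave

variable {n : ℕ} {b : OrthonormalBasis (Fin (n + 1)) ℝ (EuclideanSpace ℝ (Fin (n + 1)))}
  {u : ℝ × EuclideanSpace ℝ (Fin (n + 1)) → ℝ}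

open scoped ContDiff Laplacian

theorem planeIntegral_wave_equation (hu : ContDiff ℝ ∞ u)
    (hwave : ∀ t x, iteratedDeriv 2 (fun s => u (s, x)) t = laplacian (fun y => u (t, y)) x)
    (hsupp : ∀ t x, 1 + |t| ≤ ‖x‖ → u (t, x) = 0) (τ : ℝ × ℝ) :
    fderiv ℝ (fderiv ℝ (planeIntegral b u)) τ (1, 0) (1, 0)
      = fderiv ℝ (fderiv ℝ (planeIntegral b u)) τ (0, 1) (0, 1) := by
  have hu₂ : ContDiff ℝ 2 u := contDiff_infty.1 hu 2
  have hv : ContDiff ℝ 2 fun x => u (τ.1, x) := hu₂.comp (contDiff_const.prodMk contDiff_id)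
  -- by the wave equation, the integrand of `U_tt - U_qq` is the Laplacian of `u (t, ·)` along
  -- the hyperplane, whose integral vanishes
  have hpt (y : EuclideanSpace ℝ (Fin n)) :
      fderiv ℝ (fderiv ℝ u) (τ.1, hyperplaneChart b y + τ.2 • b (Fin.last n))
        ((1, 0) + (0, b (Fin.last n))) ((1, 0) - (0, b (Fin.last n)))
      = Δ (fun y => u (τ.1, hyperplaneChart b y + τ.2 • b (Fin.last n))) y := by
    rw [(hu₂.contDiffAt.isSymmSndFDerivAt (by simp)).fderiv_fderiv_add_sub,
      laplacian_comp_hyperplaneChart b hv, ← hwave, iteratedDeriv_two_comp_prodMk_left hu₂,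
      fderiv_fderiv_comp_prodMk_right hu₂]
  have hh : ContDiff ℝ 2 fun y => u (τ.1, hyperplaneChart b y + τ.2 • b (Fin.last n)) :=
    hv.comp ((hyperplaneChart b).toContinuousLinearMap.contDiff.add contDiff_const)
  have hPI : ContDiff ℝ 2 (planeIntegral b u) :=
    contDiff_infty.1 (contDiff_planeIntegral hu hsupp) 2
  rw [← sub_eq_zero, ← (hPI.contDiffAt.isSymmSndFDerivAt (by simp)).fderiv_fderiv_add_sub,
    fderiv_fderiv_planeIntegral_apply hu hsupp]
  refine (integral_congr_ae (.of_forall fun y => ?_)).trans (integral_laplacian_eq_zero hh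
    (hasCompactSupport_comp_hyperplaneChart b (R := 1 + |τ.1|) (hsupp τ.1) τ.2))
  rw [← hpt]
  congr 2 <;> ext <;> simp

theorem planeIntegral_initial_velocity_eq_zero (hu : ContDiff ℝ ∞ u)
    (hinit' : ∀ x, deriv (fun s => u (s, x)) 0 = 0)
    (hsupp : ∀ t x, 1 + |t| ≤ ‖x‖ → u (t, x) = 0) (q : ℝ) :
    fderiv ℝ (planeIntegral b u) (0, q) (1, 0) = 0 := by
  rw [fderiv_planeIntegral_apply hu hsupp]
  refine integral_eq_zero_of_ae (.of_forall fun y => ?_)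
  have h := hasDerivAt_comp_add_smul (z := ((0 : ℝ), hyperplaneChart b y + q • b (Fin.last n)))
    (w := ((1 : ℝ), (0 : EuclideanSpace ℝ (Fin (n + 1))))) (s := 0) (hu.differentiable (by simp) _)
  simp only [zero_smul, smul_zero, add_zero, Prod.smul_mk, smul_eq_mul, mul_one, Prod.mk_add_mk,
    zero_add] at h
  have h0 := h.deriv
  rw [hinit'] at h0
  simp [← h0]

end Wave

theorem radonTransform_wave_eq_average {n : ℕ} {u : ℝ × EuclideanSpace ℝ (Fin (n + 1)) → ℝ}
    (hu : ContDiff ℝ (⊤ : ℕ∞) u)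
    (hwave : ∀ t x, iteratedDeriv 2 (fun s => u (s, x)) t = laplacian (fun y => u (t, y)) x)
    (hinit' : ∀ x, deriv (fun s => u (s, x)) 0 = 0)
    (hsupp : ∀ t x, 1 + |t| ≤ ‖x‖ → u (t, x) = 0) {ω : EuclideanSpace ℝ (Fin (n + 1))}
    (hω : ‖ω‖ = 1) (t p : ℝ) :
    radonTransform (fun x => u (t, x)) ω p
      = (radonTransform (fun x => u (0, x)) ω (p + t)
        + radonTransform (fun x => u (0, x)) ω (p - t)) / 2 := by
  obtain ⟨b, rfl⟩ := exists_orthonormalBasis_last_eq hω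
  obtain ⟨κ, hκ⟩ := exists_radonTransform_eq_integral b
  have h := dAlembert_formula (contDiff_infty.1 (contDiff_planeIntegral hu hsupp) 2)
    (planeIntegral_wave_equation (b := b) hu hwave hsupp)
    (planeIntegral_initial_velocity_eq_zero hu hinit' hsupp) t p
  simp only [planeIntegral] at h
  rw [hκ, hκ, hκ, h]
  ring

theorem radonTransform_eq_zero_of_one_le_abs {d : ℕ} {g : EuclideanSpace ℝ (Fin d) → ℝ}
    (hg : ∀ x, 1 ≤ ‖x‖ → g x = 0) {ω : EuclideanSpace ℝ (Fin d)} (hω : ‖ω‖ = 1) {q : ℝ}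
    (hq : 1 ≤ |q|) : radonTransform g ω q = 0 :=
  setIntegral_eq_zero_of_forall_eq_zero fun x hx => hg x <| by
    have := abs_real_inner_le_norm x ω
    rw [hx.out, hω, mul_one] at this
    linarith

theorem radon_recovery_from_half_time_general {d : ℕ}
    (f : EuclideanSpace ℝ (Fin d) → ℝ)
    (hfsupp : tsupport f ⊆ ball (0 : EuclideanSpace ℝ (Fin d)) 1)
    (u : ℝ × EuclideanSpace ℝ (Fin d) → ℝ) (hu : ContDiff ℝ (⊤ : ℕ∞) u)
    (hwave : ∀ t : ℝ, ∀ x : EuclideanSpace ℝ (Fin d),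
      iteratedDeriv 2 (fun s => u (s, x)) t = laplacian (fun y => u (t, y)) x)
    (hinit : ∀ x : EuclideanSpace ℝ (Fin d), u (0, x) = f x)
    (hinit' : ∀ x : EuclideanSpace ℝ (Fin d), deriv (fun s => u (s, x)) 0 = 0)
    (hsupp : ∀ t : ℝ, ∀ x : EuclideanSpace ℝ (Fin d), 1 + |t| ≤ ‖x‖ → u (t, x) = 0) :
    ∀ ω ∈ sphere (0 : EuclideanSpace ℝ (Fin d)) 1,
      (∀ p ∈ Icc (1 : ℝ) 2,
        radonTransform (fun y => u (1, y)) ω p = (1 / 2) * radonTransform f ω (p - 1)) ∧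
      (∀ p ∈ Icc (-2 : ℝ) (-1),
        radonTransform (fun y => u (1, y)) ω p = (1 / 2) * radonTransform f ω (p + 1)) ∧
      (∀ p ∈ Icc (0 : ℝ) 1,
        radonTransform f ω p = 2 * radonTransform (fun y => u (1, y)) ω (p + 1)) ∧
      (∀ p ∈ Icc (-1 : ℝ) 0,
        radonTransform f ω p = 2 * radonTransform (fun y => u (1, y)) ω (p - 1)) := by
  intro ω hω
  rw [mem_sphere_zero_iff_norm] at hω
  obtain _ | n := d
  · simp [Subsingleton.elim ω 0] at hω
  have hf : ∀ x, 1 ≤ ‖x‖ → f x = 0 := fun x hx => image_eq_zero_of_notMem_tsupport fun h => by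
    have := hfsupp h
    rw [mem_ball_zero_iff] at this
    linarith
  have hRf (q : ℝ) (hq : 1 ≤ |q|) := radonTransform_eq_zero_of_one_le_abs hf hω hq
  have hRu (p : ℝ) : radonTransform (fun y => u (1, y)) ω p
      = (radonTransform f ω (p + 1) + radonTransform f ω (p - 1)) / 2 := by
    simpa only [hinit] using radonTransform_wave_eq_average hu hwave hinit' hsupp hω 1 p
  refine ⟨fun p hp => ?_, fun p hp => ?_, fun p hp => ?_, fun p hp => ?_⟩
  · rw [hRu, hRf (p + 1) (by rw [abs_of_nonneg] <;> linarith [hp.1])]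
    ring
  · rw [hRu, hRf (p - 1) (by rw [abs_of_nonpos] <;> linarith [hp.2])]
    ring
  · rw [hRu, add_sub_cancel_right, hRf (p + 1 + 1) (by rw [abs_of_nonneg] <;> linarith [hp.1])]
    ring
  · rw [hRu, sub_add_cancel, hRf (p - 1 - 1) (by rw [abs_of_nonpos] <;> linarith [hp.2])]
    ring

/-- Recovery of the Radon projections of the initial data from the time-1 slice of the
wave: `[R u(1,·)](ω,p) = ½[Rf](ω,p∓1)` on `[1,2]` resp. `[−2,−1]`, equivalently
`[Rf](ω,p) = 2[R u(1,·)](ω,p±1)` on `[0,1]` resp. `[−1,0]`. -/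
theorem radon_recovery_from_half_time {d : ℕ} (hd : 2 ≤ d)
    (f : EuclideanSpace ℝ (Fin d) → ℝ) (hf : ContDiff ℝ (⊤ : ℕ∞) f)
    (hfc : HasCompactSupport f)
    (hfsupp : tsupport f ⊆ ball (0 : EuclideanSpace ℝ (Fin d)) 1)
    (u : ℝ × EuclideanSpace ℝ (Fin d) → ℝ) (hu : ContDiff ℝ (⊤ : ℕ∞) u)
    (hwave : ∀ t : ℝ, ∀ x : EuclideanSpace ℝ (Fin d),
      iteratedDeriv 2 (fun s => u (s, x)) t = laplacian (fun y => u (t, y)) x)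
    (hinit : ∀ x : EuclideanSpace ℝ (Fin d), u (0, x) = f x)
    (hinit' : ∀ x : EuclideanSpace ℝ (Fin d), deriv (fun s => u (s, x)) 0 = 0)
    (hsupp : ∀ t : ℝ, ∀ x : EuclideanSpace ℝ (Fin d), 1 + |t| ≤ ‖x‖ → u (t, x) = 0) :
    ∀ ω ∈ sphere (0 : EuclideanSpace ℝ (Fin d)) 1,
      (∀ p ∈ Icc (1 : ℝ) 2,
        radonTransform (fun y => u (1, y)) ω p = (1 / 2) * radonTransform f ω (p - 1)) ∧
      (∀ p ∈ Icc (-2 : ℝ) (-1),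
        radonTransform (fun y => u (1, y)) ω p = (1 / 2) * radonTransform f ω (p + 1)) ∧
      (∀ p ∈ Icc (0 : ℝ) 1,
        radonTransform f ω p = 2 * radonTransform (fun y => u (1, y)) ω (p + 1)) ∧
      (∀ p ∈ Icc (-1 : ℝ) 0,
        radonTransform f ω p = 2 * radonTransform (fun y => u (1, y)) ω (p - 1)) :=
  radon_recovery_from_half_time_general f hfsupp u hu hwave hinit hinit' hsupp
end

section
/- (Even reflection smoothness.) Let φ : ℝ → ℝ be C^∞. The function ψ : ℝ → ℝ defined by ψ(p) := φ(|p|) is C^∞ on ℝ if and only if every odd-order derivative of φ vanishes at 0, i.e. φ^{(2k+1)}(0) = 0 for all k ∈ ℕ. -/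
/-!
Away from `0` the function `ψ p = φ |p|` is as smooth as `φ`, so everything happens at `0`.
If `ψ` is smooth, it is even, so its odd derivatives vanish at `0`; on `[0, ∞)` it agrees with
`φ`, and `[0, ∞)` determines derivatives at `0`, so the odd derivatives of `φ` vanish there too.
Conversely, if they vanish, the derivatives of `ψ` alternate between the even extension
`p ↦ φ⁽²ᵏ⁾ |p|` and the odd extension `p ↦ sign p · φ⁽²ᵏ⁺¹⁾ |p|`: gluing the one-sided
derivatives at `0` works exactly because `φ⁽²ᵏ⁺¹⁾ 0 = 0`.
-/

open Set
open scoped ContDiff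

section Gluing

variable {F : Type*} [NormedAddCommGroup F] [NormedSpace ℝ F] {f f' g g' h h' : ℝ → F}

theorem hasDerivWithinAt_of_eqOn_of_isClosed {s : Set ℝ} (hs : IsClosed s)
    (hg : ∀ x, HasDerivAt g (g' x) x) (hfg : EqOn f g s) (hfg' : EqOn f' g' s) (x : ℝ) :
    HasDerivWithinAt f (f' x) s x := by
  by_cases hx : x ∈ s
  · exact hfg' hx ▸ (hg x).hasDerivWithinAt.congr hfg (hfg hx)
  · exact HasFDerivWithinAt.of_notMem_closure (hs.closure_eq.symm ▸ hx)

theorem hasDerivAt_of_eqOn_Ici_of_eqOn_Iic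
    (hg : ∀ x, HasDerivAt g (g' x) x) (hh : ∀ x, HasDerivAt h (h' x) x)
    (hfg : EqOn f g (Ici 0)) (hfh : EqOn f h (Iic 0))
    (hfg' : EqOn f' g' (Ici 0)) (hfh' : EqOn f' h' (Iic 0)) (x : ℝ) :
    HasDerivAt f (f' x) x := by
  have h := (hasDerivWithinAt_of_eqOn_of_isClosed isClosed_Ici hg hfg hfg' x).union
    (hasDerivWithinAt_of_eqOn_of_isClosed isClosed_Iic hh hfh hfh' x)
  rwa [Ici_union_Iic, hasDerivWithinAt_univ] at h

end Gluing

theorem comp_abs_eqOn_Ici {α : Type*} (f : ℝ → α) : EqOn (fun x => f |x|) f (Ici 0) :=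
  fun _ hx => by simp [abs_of_nonneg (mem_Ici.mp hx)]

theorem comp_abs_eqOn_Iic {α : Type*} (f : ℝ → α) :
    EqOn (fun x => f |x|) (fun x => f (-x)) (Iic 0) :=
  fun _ hx => by simp [abs_of_nonpos (mem_Iic.mp hx)]

/-- The odd extension of `f` restricted to `[0, ∞)`; it vanishes at `0` since `Real.sign 0 = 0`. -/
noncomputable def oddExt (f : ℝ → ℝ) (x : ℝ) : ℝ := Real.sign x * f |x|

section Reflection

variable {f f' : ℝ → ℝ}

theorem oddExt_eqOn_Ici (h0 : f 0 = 0) : EqOn (oddExt f) f (Ici 0) := by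
  intro x hx
  rcases (mem_Ici.mp hx).eq_or_lt with rfl | hx
  · simp [oddExt, h0]
  · simp [oddExt, Real.sign_of_pos hx, abs_of_pos hx]

theorem oddExt_eqOn_Iic (h0 : f 0 = 0) : EqOn (oddExt f) (fun x => -f (-x)) (Iic 0) := by
  intro x hx
  rcases (mem_Iic.mp hx).eq_or_lt with rfl | hx
  · simp [oddExt, h0]
  · simp [oddExt, Real.sign_of_neg hx, abs_of_neg hx]

theorem hasDerivAt_comp_abs (hf : ∀ x, HasDerivAt f (f' x) x) (h0 : f' 0 = 0) (x : ℝ) :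
    HasDerivAt (fun x => f |x|) (oddExt f' x) x :=
  hasDerivAt_of_eqOn_Ici_of_eqOn_Iic hf (fun x => (hf (-x)).comp x (hasDerivAt_neg x))
    (comp_abs_eqOn_Ici f) (comp_abs_eqOn_Iic f) (oddExt_eqOn_Ici h0)
    (fun _ hy => (oddExt_eqOn_Iic h0 hy).trans (mul_neg_one _).symm) x

theorem hasDerivAt_oddExt (hf : ∀ x, HasDerivAt f (f' x) x) (h0 : f 0 = 0) (x : ℝ) :
    HasDerivAt (oddExt f) (f' |x|) x :=
  hasDerivAt_of_eqOn_Ici_of_eqOn_Iic (f' := fun x => f' |x|) hf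
    (fun x => ((hf (-x)).comp x (hasDerivAt_neg x)).neg) (oddExt_eqOn_Ici h0)
    (oddExt_eqOn_Iic h0) (comp_abs_eqOn_Ici f')
    (fun _ hy => (comp_abs_eqOn_Iic f' hy).trans (by simp)) x

theorem deriv_comp_abs (hf : ∀ x, HasDerivAt f (f' x) x) (h0 : f' 0 = 0) :
    deriv (fun x => f |x|) = oddExt f' :=
  funext fun x => (hasDerivAt_comp_abs hf h0 x).deriv

theorem deriv_oddExt (hf : ∀ x, HasDerivAt f (f' x) x) (h0 : f 0 = 0) :
    deriv (oddExt f) = fun x => f' |x| :=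
  funext fun x => (hasDerivAt_oddExt hf h0 x).deriv

end Reflection

section IteratedDeriv

variable {𝕜 F : Type*} [NontriviallyNormedField 𝕜] [NormedAddCommGroup F] [NormedSpace 𝕜 F]

theorem hasDerivAt_iteratedDeriv {f : 𝕜 → F} (hf : ContDiff 𝕜 ∞ f) (n : ℕ) (x : 𝕜) :
    HasDerivAt (iteratedDeriv n f) (iteratedDeriv (n + 1) f x) x := by
  rw [iteratedDeriv_succ]
  exact ((hf.differentiable_iteratedDeriv n (mod_cast WithTop.coe_lt_top _)) x).hasDerivAt

theorem iteratedDeriv_eq_of_eqOn {f g : 𝕜 → F} {s : Set 𝕜} {n : ℕ} {x : 𝕜}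
    (hs : UniqueDiffOn 𝕜 s) (hx : x ∈ s) (hf : ContDiffAt 𝕜 n f x) (hg : ContDiffAt 𝕜 n g x)
    (hfg : EqOn f g s) : iteratedDeriv n f x = iteratedDeriv n g x := by
  rw [← iteratedDerivWithin_eq_iteratedDeriv hs hf hx,
    ← iteratedDerivWithin_eq_iteratedDeriv hs hg hx, iteratedDerivWithin_congr hfg hx]

end IteratedDeriv

theorem Function.Even.iteratedDeriv_odd_eq_zero {F : Type*} [NormedAddCommGroup F]
    [NormedSpace ℝ F] {f : ℝ → F} (hf : f.Even) (k : ℕ) :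
    iteratedDeriv (2 * k + 1) f 0 = 0 := by
  have h := iteratedDeriv_comp_neg (2 * k + 1) f 0
  rw [funext hf, neg_zero, (odd_two_mul_add_one k).neg_one_pow, neg_one_smul] at h
  exact (smul_eq_zero.mp ((two_smul ℝ _).trans (add_eq_zero_iff_eq_neg.mpr h))).resolve_left
    two_ne_zero

section OddDerivativesVanish

variable {φ : ℝ → ℝ} (hφ : ContDiff ℝ ∞ φ) (hodd : ∀ k : ℕ, iteratedDeriv (2 * k + 1) φ 0 = 0)
include hφ hodd

theorem iteratedDeriv_two_mul_comp_abs (k : ℕ) :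
    iteratedDeriv (2 * k) (fun x => φ |x|) = fun x => iteratedDeriv (2 * k) φ |x| := by
  induction k with
  | zero => simp
  | succ k ih =>
    rw [mul_add_one, iteratedDeriv_succ, iteratedDeriv_succ, ih,
      deriv_comp_abs (hasDerivAt_iteratedDeriv hφ _) (hodd k),
      deriv_oddExt (hasDerivAt_iteratedDeriv hφ _) (hodd k)]

theorem iteratedDeriv_two_mul_add_one_comp_abs (k : ℕ) :
    iteratedDeriv (2 * k + 1) (fun x => φ |x|) = oddExt (iteratedDeriv (2 * k + 1) φ) := by
  rw [iteratedDeriv_succ, iteratedDeriv_two_mul_comp_abs hφ hodd,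
    deriv_comp_abs (hasDerivAt_iteratedDeriv hφ _) (hodd k)]

theorem contDiff_comp_abs : ContDiff ℝ ∞ (fun x => φ |x|) := by
  refine contDiff_of_differentiable_iteratedDeriv fun m _ x => ?_
  obtain ⟨k, rfl | rfl⟩ := Nat.even_or_odd' m
  · rw [iteratedDeriv_two_mul_comp_abs hφ hodd]
    exact (hasDerivAt_comp_abs (hasDerivAt_iteratedDeriv hφ _) (hodd k) x).differentiableAt
  · rw [iteratedDeriv_two_mul_add_one_comp_abs hφ hodd]
    exact (hasDerivAt_oddExt (hasDerivAt_iteratedDeriv hφ _) (hodd k) x).differentiableAt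

end OddDerivativesVanish

theorem iteratedDeriv_odd_eq_zero_of_contDiff_comp_abs {φ : ℝ → ℝ} (hφ : ContDiff ℝ ∞ φ)
    (hψ : ContDiff ℝ ∞ (fun x => φ |x|)) (k : ℕ) : iteratedDeriv (2 * k + 1) φ 0 = 0 := by
  have hψ_even : Function.Even (fun x => φ |x|) := fun x => by simp only [abs_neg]
  rw [iteratedDeriv_eq_of_eqOn (uniqueDiffOn_Ici 0) self_mem_Ici
    (contDiff_infty.1 hφ _).contDiffAt (contDiff_infty.1 hψ _).contDiffAt
    (comp_abs_eqOn_Ici φ).symm]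
  exact hψ_even.iteratedDeriv_odd_eq_zero k

/-- Even reflection smoothness: for a `C^∞` function `φ : ℝ → ℝ`, the function
`p ↦ φ(|p|)` is `C^∞` on `ℝ` iff all odd-order derivatives of `φ` vanish at `0`. -/
theorem even_reflection_smooth (φ : ℝ → ℝ) (hφ : ContDiff ℝ (⊤ : ℕ∞) φ) :
    ContDiff ℝ (⊤ : ℕ∞) (fun p : ℝ => φ |p|) ↔
      ∀ k : ℕ, iteratedDeriv (2 * k + 1) φ 0 = 0 :=
  ⟨iteratedDeriv_odd_eq_zero_of_contDiff_comp_abs hφ, contDiff_comp_abs hφ⟩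
end

section
/- (Odd reflection smoothness.) Let φ : ℝ → ℝ be C^∞. Define ψ : ℝ → ℝ by ψ(p) := φ(p) for p ≥ 0 and ψ(p) := −φ(−p) for p < 0. Then ψ is C^∞ on ℝ if and only if every even-order derivative of φ vanishes at 0, i.e. φ^{(2k)}(0) = 0 for all k ∈ ℕ (in particular φ(0) = 0). -/
/-!
Glue two smooth functions, `f` on `[0, ∞)` and `g` on `(-∞, 0)`. If all derivatives of `f` and
`g` agree at `0`, the one-sided derivatives of the glued function match there, so differentiation
commutes with gluing and the glued function is `C^∞`. Conversely, the `n`-th derivative of a `C^∞`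
glued function is continuous and coincides with `f⁽ⁿ⁾` on `(0, ∞)` and with `g⁽ⁿ⁾` on `(-∞, 0)`,
so `f⁽ⁿ⁾ 0 = g⁽ⁿ⁾ 0`. For the odd reflection `g p = -φ (-p)` we have `g⁽ⁿ⁾ 0 = -(-1)ⁿ φ⁽ⁿ⁾ 0`,
which agrees with `φ⁽ⁿ⁾ 0` for odd `n` and forces `φ⁽ⁿ⁾ 0 = 0` for even `n`.
-/

open Set Filter Topology
open scoped ContDiff

noncomputable def glueAtZero {E : Type*} (f g : ℝ → E) : ℝ → E :=
  fun p => if 0 ≤ p then f p else g p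

section GlueAtZero

variable {E : Type*} {f g : ℝ → E}

theorem glueAtZero_eqOn_Ici : EqOn (glueAtZero f g) f (Ici 0) :=
  fun _ hp => if_pos hp

theorem glueAtZero_eqOn_Iio : EqOn (glueAtZero f g) g (Iio 0) :=
  fun _ hp => if_neg (not_le.2 hp)

theorem glueAtZero_eqOn_Iic (h₀ : f 0 = g 0) : EqOn (glueAtZero f g) g (Iic 0) := by
  intro p hp
  rcases (mem_Iic.1 hp).lt_or_eq with hp | rfl
  · exact glueAtZero_eqOn_Iio hp
  · exact (glueAtZero_eqOn_Ici self_mem_Ici).trans h₀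

theorem glueAtZero_eventuallyEq_of_pos {x : ℝ} (hx : 0 < x) : glueAtZero f g =ᶠ[𝓝 x] f :=
  eventuallyEq_of_mem (Ioi_mem_nhds hx) fun _ hp => glueAtZero_eqOn_Ici (mem_Ici.2 (le_of_lt hp))

theorem glueAtZero_eventuallyEq_of_neg {x : ℝ} (hx : x < 0) : glueAtZero f g =ᶠ[𝓝 x] g :=
  eventuallyEq_of_mem (Iio_mem_nhds hx) glueAtZero_eqOn_Iio

variable [NormedAddCommGroup E] [NormedSpace ℝ E]

theorem hasDerivAt_glueAtZero (hf : Differentiable ℝ f) (hg : Differentiable ℝ g)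
    (h₀ : f 0 = g 0) (h₁ : deriv f 0 = deriv g 0) (x : ℝ) :
    HasDerivAt (glueAtZero f g) (glueAtZero (deriv f) (deriv g) x) x := by
  rcases lt_trichotomy x 0 with hx | rfl | hx
  · rw [glueAtZero_eqOn_Iio hx]
    exact (hg x).hasDerivAt.congr_of_eventuallyEq (glueAtZero_eventuallyEq_of_neg hx)
  · have hright : HasDerivWithinAt (glueAtZero f g) (deriv f 0) (Ici 0) 0 :=
      (hf 0).hasDerivAt.hasDerivWithinAt.congr_of_mem glueAtZero_eqOn_Ici self_mem_Ici
    have hleft : HasDerivWithinAt (glueAtZero f g) (deriv f 0) (Iic 0) 0 :=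
      h₁ ▸ (hg 0).hasDerivAt.hasDerivWithinAt.congr_of_mem (glueAtZero_eqOn_Iic h₀)
        self_mem_Iic
    rw [glueAtZero_eqOn_Ici self_mem_Ici, ← hasDerivWithinAt_univ, ← Iic_union_Ici]
    exact hleft.union hright
  · rw [glueAtZero_eqOn_Ici hx.le]
    exact (hf x).hasDerivAt.congr_of_eventuallyEq (glueAtZero_eventuallyEq_of_pos hx)

theorem hasDerivAt_glueAtZero_iteratedDeriv (hf : ContDiff ℝ ∞ f) (hg : ContDiff ℝ ∞ g)
    (hfg : ∀ n, iteratedDeriv n f 0 = iteratedDeriv n g 0) (n : ℕ) (x : ℝ) :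
    HasDerivAt (glueAtZero (iteratedDeriv n f) (iteratedDeriv n g))
      (glueAtZero (iteratedDeriv (n + 1) f) (iteratedDeriv (n + 1) g) x) x := by
  simpa only [iteratedDeriv_succ] using hasDerivAt_glueAtZero
    (hf.differentiable_iteratedDeriv n (WithTop.coe_lt_coe.2 (ENat.natCast_lt_top n)))
    (hg.differentiable_iteratedDeriv n (WithTop.coe_lt_coe.2 (ENat.natCast_lt_top n)))
    (hfg n) (by simpa only [iteratedDeriv_succ] using hfg (n + 1)) x

theorem iteratedDeriv_glueAtZero (hf : ContDiff ℝ ∞ f) (hg : ContDiff ℝ ∞ g)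
    (hfg : ∀ n, iteratedDeriv n f 0 = iteratedDeriv n g 0) (n : ℕ) :
    iteratedDeriv n (glueAtZero f g) = glueAtZero (iteratedDeriv n f) (iteratedDeriv n g) := by
  induction n with
  | zero => simp only [iteratedDeriv_zero]
  | succ n ih =>
    rw [iteratedDeriv_succ, ih]
    exact funext fun x => (hasDerivAt_glueAtZero_iteratedDeriv hf hg hfg n x).deriv

theorem contDiff_glueAtZero (hf : ContDiff ℝ ∞ f) (hg : ContDiff ℝ ∞ g)
    (hfg : ∀ n, iteratedDeriv n f 0 = iteratedDeriv n g 0) :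
    ContDiff ℝ ∞ (glueAtZero f g) :=
  contDiff_of_differentiable_iteratedDeriv fun n _ x => by
    rw [iteratedDeriv_glueAtZero hf hg hfg n]
    exact (hasDerivAt_glueAtZero_iteratedDeriv hf hg hfg n x).differentiableAt

theorem iteratedDeriv_glueAtZero_eqOn_Ioi (n : ℕ) :
    EqOn (iteratedDeriv n (glueAtZero f g)) (iteratedDeriv n f) (Ioi 0) := fun _ hp =>
  (glueAtZero_eventuallyEq_of_pos hp).iteratedDeriv_eq n

theorem iteratedDeriv_glueAtZero_eqOn_Iio (n : ℕ) :
    EqOn (iteratedDeriv n (glueAtZero f g)) (iteratedDeriv n g) (Iio 0) := fun _ hp =>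
  (glueAtZero_eventuallyEq_of_neg hp).iteratedDeriv_eq n

theorem iteratedDeriv_eq_of_contDiff_glueAtZero (hf : ContDiff ℝ ∞ f) (hg : ContDiff ℝ ∞ g)
    (hglue : ContDiff ℝ ∞ (glueAtZero f g)) (n : ℕ) :
    iteratedDeriv n f 0 = iteratedDeriv n g 0 := by
  have hcont {u : ℝ → E} (hu : ContDiff ℝ ∞ u) : Continuous (iteratedDeriv n u) :=
    hu.continuous_iteratedDeriv n (WithTop.coe_le_coe.2 le_top)
  have hright := (iteratedDeriv_glueAtZero_eqOn_Ioi n).closure (hcont hglue) (hcont hf)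
  have hleft := (iteratedDeriv_glueAtZero_eqOn_Iio n).closure (hcont hglue) (hcont hg)
  rw [closure_Ioi] at hright
  rw [closure_Iio] at hleft
  exact (hright self_mem_Ici).symm.trans (hleft self_mem_Iic)

theorem contDiff_glueAtZero_iff (hf : ContDiff ℝ ∞ f) (hg : ContDiff ℝ ∞ g) :
    ContDiff ℝ ∞ (glueAtZero f g) ↔ ∀ n, iteratedDeriv n f 0 = iteratedDeriv n g 0 :=
  ⟨iteratedDeriv_eq_of_contDiff_glueAtZero hf hg, contDiff_glueAtZero hf hg⟩

end GlueAtZero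

/-- Odd reflection smoothness: for a `C^∞` function `φ : ℝ → ℝ`, the function equal to
`φ(p)` for `p ≥ 0` and to `−φ(−p)` for `p < 0` is `C^∞` on `ℝ` iff all even-order
derivatives of `φ` vanish at `0`. -/
theorem odd_reflection_smooth (φ : ℝ → ℝ) (hφ : ContDiff ℝ (⊤ : ℕ∞) φ) :
    ContDiff ℝ (⊤ : ℕ∞) (fun p : ℝ => if 0 ≤ p then φ p else -φ (-p)) ↔
      ∀ k : ℕ, iteratedDeriv (2 * k) φ 0 = 0 := by
  have hreflect : ContDiff ℝ ∞ fun p => -φ (-p) := (hφ.comp contDiff_neg).neg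
  change ContDiff ℝ ∞ (glueAtZero φ fun p => -φ (-p)) ↔ _
  simp only [contDiff_glueAtZero_iff hφ hreflect, iteratedDeriv_fun_neg, iteratedDeriv_comp_neg,
    neg_zero, smul_eq_mul]
  constructor
  · intro h k
    have h2k := h (2 * k)
    rw [pow_mul, neg_one_sq, one_pow, one_mul] at h2k
    linarith
  · intro h n
    rcases Nat.even_or_odd' n with ⟨k, rfl | rfl⟩
    · simp [h k]
    · simp [pow_succ, pow_mul]
end
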